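/- arXiv:math/0406520 — 5 statements merged into one kernel-verified Lean document; each statement's English description precedes it below -/
import Mathlib

section
/- Let S₀ be the central subspace of the regression of Y on X, i.e., S₀ is a dimension-reduction subspace and S₀ is contained in every dimension-reduction subspace. Then for any subspace H of ℝ^p, the coordinate hypothesis P_H S₀ = {0} (equivalently, S₀ ⊆ H^⊥) holds if and only if Y and P_H X are conditionally independent given the σ-algebra generated by Q_H X. -/
open MeasureTheory ProbabilityTheory

/-- A subspace `S` of the predictor space is a *dimension-reduction subspace* for the
regression of `Y` on `X` if `Y` and `X` are conditionally independent given the σ-algebra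
generated by `P_S ∘ X`, where `P_S` is the orthogonal projection onto `S`. -/
def IsDRS {p : ℕ} {Ω : Type*} [MeasurableSpace Ω] [StandardBorelSpace Ω]
    (μ : Measure Ω) [IsFiniteMeasure μ]
    (X : Ω → EuclideanSpace ℝ (Fin p)) (Y : Ω → ℝ) (hX : Measurable X)
    (S : Submodule ℝ (EuclideanSpace ℝ (Fin p))) : Prop :=
  CondIndepFun
    (MeasurableSpace.comap
      (fun ω => ((Submodule.orthogonalProjectionOnto S (X ω) : S) : EuclideanSpace ℝ (Fin p)))
      inferInstance)
    (Measurable.comap_le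
      ((continuous_subtype_val.comp (Submodule.orthogonalProjectionOnto S).continuous).measurable.comp hX))
    Y X μ

/-!
`Y ⫫ Z ∣ 𝓖` is equivalent to `ℙ(Y ∈ s ∣ σ(Z) ⊔ 𝓖) = ℙ(Y ∈ s ∣ 𝓖)` for all `s`, and by the
tower property this identity passes to every σ-algebra between `𝓖` and `σ(Z) ⊔ 𝓖`. Hence
`Y ⫫ Z ∣ 𝓖` implies `Y ⫫ W ∣ 𝓖'` whenever `𝓖 ≤ 𝓖' ≤ σ(Z) ⊔ 𝓖` and `σ(W) ≤ σ(Z) ⊔ 𝓖`.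

If `S₀ ≤ Hᗮ`, then `P_{S₀} X = P_{S₀} (Q_H X)`, so `σ(P_{S₀} X) ≤ σ(Q_H X) ≤ σ(X)` and
`Y ⫫ X ∣ P_{S₀} X` yields `Y ⫫ P_H X ∣ Q_H X`. Conversely, `X = P_H X + Q_H X` gives
`σ(X) ≤ σ(P_H X) ⊔ σ(Q_H X)`, so `Y ⫫ P_H X ∣ Q_H X` yields `Y ⫫ X ∣ Q_H X`: `Hᗮ` is a
dimension-reduction subspace and minimality of `S₀` gives `S₀ ≤ Hᗮ`.
-/

namespace MeasurableSpace

variable {Ω : Type*}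

theorem isPiSystem_image2_inter (m₁ m₂ : MeasurableSpace Ω) :
    IsPiSystem (Set.image2 (· ∩ ·) {s | MeasurableSet[m₁] s} {t | MeasurableSet[m₂] t}) := by
  rintro _ ⟨s₁, hs₁, t₁, ht₁, rfl⟩ _ ⟨s₂, hs₂, t₂, ht₂, rfl⟩ -
  exact ⟨s₁ ∩ s₂, hs₁.inter hs₂, t₁ ∩ t₂, ht₁.inter ht₂, Set.inter_inter_inter_comm ..⟩

theorem sup_eq_generateFrom_image2_inter (m₁ m₂ : MeasurableSpace Ω) :
    m₁ ⊔ m₂ =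
      generateFrom (Set.image2 (· ∩ ·) {s | MeasurableSet[m₁] s} {t | MeasurableSet[m₂] t}) := by
  refine le_antisymm (sup_le (fun s hs => ?_) (fun t ht => ?_)) (generateFrom_le ?_)
  · exact measurableSet_generateFrom ⟨s, hs, Set.univ, .univ, Set.inter_univ s⟩
  · exact measurableSet_generateFrom ⟨Set.univ, .univ, t, ht, Set.univ_inter t⟩
  · rintro _ ⟨s, hs, t, ht, rfl⟩
    exact (le_sup_left (b := m₂) s hs).inter (le_sup_right (a := m₁) t ht)

end MeasurableSpace

namespace MeasureTheory

variable {Ω E : Type*} {m n mΩ : MeasurableSpace Ω} {μ : Measure Ω}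

theorem setIntegral_eq_of_isPiSystem [NormedAddCommGroup E] [NormedSpace ℝ E] [CompleteSpace E]
    {C : Set (Set Ω)} (hn : n ≤ mΩ) (hC_gen : n = MeasurableSpace.generateFrom C)
    (hC : IsPiSystem C) {f g : Ω → E} (hf : Integrable f μ) (hg : Integrable g μ)
    (h_univ : ∫ x, f x ∂μ = ∫ x, g x ∂μ) (h_eq : ∀ s ∈ C, ∫ x in s, f x ∂μ = ∫ x in s, g x ∂μ)
    {s : Set Ω} (hs : MeasurableSet[n] s) : ∫ x in s, f x ∂μ = ∫ x in s, g x ∂μ := by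
  induction s, hs using MeasurableSpace.induction_on_inter hC_gen hC with
  | empty => simp
  | basic t ht => exact h_eq t ht
  | compl t ht iht =>
    rw [eq_sub_of_add_eq' (integral_add_compl (hn t ht) hf),
      eq_sub_of_add_eq' (integral_add_compl (hn t ht) hg), h_univ, iht]
  | iUnion u hu_disj hu_meas ihu =>
    rw [integral_iUnion (fun i => hn _ (hu_meas i)) hu_disj hf.integrableOn,
      integral_iUnion (fun i => hn _ (hu_meas i)) hu_disj hg.integrableOn]
    exact tsum_congr ihu

theorem setIntegral_indicator_one {s t : Set Ω} (hs : MeasurableSet s) :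
    ∫ x in t, (s.indicator fun _ => (1 : ℝ)) x ∂μ = μ.real (s ∩ t) := by
  rw [integral_indicator hs, setIntegral_const, smul_eq_mul, mul_one,
    measureReal_restrict_apply hs]

theorem setIntegral_condExp_indicator_one [IsFiniteMeasure μ] (hm : m ≤ mΩ) {s t : Set Ω}
    (hs : MeasurableSet s) (ht : MeasurableSet[m] t) :
    ∫ x in t, (μ⟦s | m⟧) x ∂μ = μ.real (s ∩ t) := by
  rw [setIntegral_condExp hm ((integrable_const 1).indicator hs) ht, setIntegral_indicator_one hs]

theorem condExp_ae_eq_of_le_of_le [IsFiniteMeasure μ] {m₁ m₂ : MeasurableSpace Ω}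
    (h₁₂ : m₁ ≤ m₂) (h₂n : m₂ ≤ n) (hn : n ≤ mΩ) {f : Ω → ℝ} (hf : μ[f | n] =ᵐ[μ] μ[f | m₁]) :
    μ[f | n] =ᵐ[μ] μ[f | m₂] :=
  calc μ[f | n] =ᵐ[μ] μ[f | m₁] := hf
    _ = μ[μ[f | m₁] | m₂] :=
      (condExp_of_stronglyMeasurable (h₂n.trans hn) (stronglyMeasurable_condExp.mono h₁₂)
        integrable_condExp).symm
    _ =ᵐ[μ] μ[μ[f | n] | m₂] := condExp_congr_ae hf.symm
    _ =ᵐ[μ] μ[f | m₂] := condExp_condExp_of_le h₂n hn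

theorem condExp_indicator_ae_eq_mul [IsFiniteMeasure μ] {g : Ω → ℝ} (hg : StronglyMeasurable[m] g)
    (hg_int : Integrable g μ) {t : Set Ω} (ht : MeasurableSet t) :
    μ[t.indicator g | m] =ᵐ[μ] μ⟦t | m⟧ * g := by
  have h_mul : t.indicator g = t.indicator (fun _ => 1) * g := by
    funext ω
    by_cases hω : ω ∈ t <;> simp [hω]
  rw [h_mul]
  exact condExp_mul_of_stronglyMeasurable_right hg (h_mul ▸ hg_int.indicator ht)
    ((integrable_const 1).indicator ht)

end MeasureTheory

namespace ProbabilityTheory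

variable {Ω : Type*} {m m' m₁ m₂ m₃ n mΩ : MeasurableSpace Ω} [StandardBorelSpace Ω]
  {μ : Measure Ω} [IsFiniteMeasure μ]

theorem CondIndep.condExp_sup_ae_eq {hm : m ≤ mΩ} (hm₁ : m₁ ≤ mΩ) (hm₂ : m₂ ≤ mΩ)
    (h : CondIndep m m₁ m₂ hm μ) {s : Set Ω} (hs : MeasurableSet[m₁] s) :
    μ⟦s | m₂ ⊔ m⟧ =ᵐ[μ] μ⟦s | m⟧ := by
  have hn : m₂ ⊔ m ≤ mΩ := sup_le hm₂ hm
  have hs_int : Integrable (s.indicator fun _ => (1 : ℝ)) μ :=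
    (integrable_const 1).indicator (hm₁ s hs)
  refine (ae_eq_condExp_of_forall_setIntegral_eq hn hs_int
    (fun _ _ _ => integrable_condExp.integrableOn) (fun E hE _ => ?_)
    (stronglyMeasurable_condExp.mono (le_sup_right : m ≤ m₂ ⊔ m)).aestronglyMeasurable).symm
  refine setIntegral_eq_of_isPiSystem hn (MeasurableSpace.sup_eq_generateFrom_image2_inter m₂ m)
    (MeasurableSpace.isPiSystem_image2_inter m₂ m) integrable_condExp hs_int
    (integral_condExp hm) ?_ hE
  rintro _ ⟨t, ht, c, hc, rfl⟩
  have hG_int : Integrable (t.indicator (μ⟦s | m⟧)) μ := integrable_condExp.indicator (hm₂ t ht)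
  have h_pull : μ[t.indicator (μ⟦s | m⟧) | m] =ᵐ[μ] μ⟦s ∩ t | m⟧ := by
    filter_upwards [condExp_indicator_ae_eq_mul stronglyMeasurable_condExp integrable_condExp
      (hm₂ t ht), (condIndep_iff m m₁ m₂ hm hm₁ hm₂ μ).1 h s t hs ht] with ω h₁ h₂
    rw [h₁, h₂, Pi.mul_apply, Pi.mul_apply, mul_comm]
  calc ∫ x in t ∩ c, (μ⟦s | m⟧) x ∂μ
      = ∫ x in c, t.indicator (μ⟦s | m⟧) x ∂μ := by
        rw [setIntegral_indicator (hm₂ t ht), Set.inter_comm]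
    _ = ∫ x in c, (μ[t.indicator (μ⟦s | m⟧) | m]) x ∂μ := (setIntegral_condExp hm hG_int hc).symm
    _ = ∫ x in c, (μ⟦s ∩ t | m⟧) x ∂μ :=
        setIntegral_congr_ae (hm c hc) (h_pull.mono fun _ h _ => h)
    _ = μ.real (s ∩ t ∩ c) :=
        setIntegral_condExp_indicator_one hm ((hm₁ s hs).inter (hm₂ t ht)) hc
    _ = ∫ x in t ∩ c, (s.indicator fun _ => (1 : ℝ)) x ∂μ := by
        rw [setIntegral_indicator_one (hm₁ s hs), Set.inter_assoc]

theorem condIndep_of_forall_condExp_ae_eq {hm : m ≤ mΩ} (hmn : m ≤ n) (hn : n ≤ mΩ)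
    (hm₁ : m₁ ≤ mΩ) (hm₂ : m₂ ≤ n) (h : ∀ s, MeasurableSet[m₁] s → μ⟦s | n⟧ =ᵐ[μ] μ⟦s | m⟧) :
    CondIndep m m₁ m₂ hm μ := by
  refine (condIndep_iff m m₁ m₂ hm hm₁ (hm₂.trans hn) μ).2 fun s t hs ht => ?_
  have hs_int : Integrable (s.indicator fun _ => (1 : ℝ)) μ :=
    (integrable_const 1).indicator (hm₁ s hs)
  have h_inter : (s ∩ t).indicator (fun _ => (1 : ℝ)) = t.indicator (s.indicator fun _ => 1) := by
    rw [Set.indicator_indicator, Set.inter_comm]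
  calc μ⟦s ∩ t | m⟧
      =ᵐ[μ] μ[μ⟦s ∩ t | n⟧ | m] := (condExp_condExp_of_le hmn hn).symm
    _ =ᵐ[μ] μ[t.indicator (μ⟦s | m⟧) | m] := by
        refine condExp_congr_ae ?_
        rw [h_inter]
        filter_upwards [condExp_indicator hs_int (hm₂ t ht), h s hs] with ω h₁ h₂
        by_cases hω : ω ∈ t <;> simp [h₁, hω, h₂]
    _ =ᵐ[μ] μ⟦t | m⟧ * μ⟦s | m⟧ :=
        condExp_indicator_ae_eq_mul stronglyMeasurable_condExp integrable_condExp
          (hn t (hm₂ t ht))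
    _ = μ⟦s | m⟧ * μ⟦t | m⟧ := mul_comm _ _

/-- The weak union and decomposition properties of conditional independence, combined. -/
theorem CondIndep.of_le_sup {hm : m ≤ mΩ} {hm' : m' ≤ mΩ} (hm₁ : m₁ ≤ mΩ) (hm₂ : m₂ ≤ mΩ)
    (h : CondIndep m m₁ m₂ hm μ) (hmm' : m ≤ m') (hm'_le : m' ≤ m₂ ⊔ m) (hm₃ : m₃ ≤ m₂ ⊔ m) :
    CondIndep m' m₁ m₃ hm' μ :=
  condIndep_of_forall_condExp_ae_eq hm'_le (sup_le hm₂ hm) hm₁ hm₃ fun _ hs =>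
    condExp_ae_eq_of_le_of_le hmm' hm'_le (sup_le hm₂ hm) (h.condExp_sup_ae_eq hm₁ hm₂ hs)

theorem CondIndepFun.of_comap_le_sup {β γ δ : Type*} [MeasurableSpace β] [MeasurableSpace γ]
    [MeasurableSpace δ] {hm : m ≤ mΩ} {hm' : m' ≤ mΩ} {Y : Ω → β} {Z : Ω → γ} {W : Ω → δ}
    (hY : Measurable Y) (hZ : Measurable Z) (h : CondIndepFun m hm Y Z μ) (hmm' : m ≤ m')
    (hm'_le : m' ≤ .comap Z inferInstance ⊔ m)
    (hW : .comap W inferInstance ≤ .comap Z inferInstance ⊔ m) :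
    CondIndepFun m' hm' Y W μ :=
  CondIndep.of_le_sup hY.comap_le hZ.comap_le h hmm' hm'_le hW

end ProbabilityTheory

section OrthogonalProjection

variable {Ω E : Type*} [NormedAddCommGroup E] [InnerProductSpace ℝ E] [MeasurableSpace E]
  [BorelSpace E] (X : Ω → E)

theorem comap_starProjection_comp_le (K : Submodule ℝ E) [K.HasOrthogonalProjection] :
    MeasurableSpace.comap (fun ω => K.starProjection (X ω)) inferInstance ≤
      MeasurableSpace.comap X inferInstance :=
  MeasurableSpace.comap_le_comap_of_eq_comp _ K.starProjection.continuous.measurable rfl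

theorem comap_starProjection_comp_mono {K L : Submodule ℝ E} [K.HasOrthogonalProjection]
    [L.HasOrthogonalProjection] (hKL : K ≤ L) :
    MeasurableSpace.comap (fun ω => K.starProjection (X ω)) inferInstance ≤
      MeasurableSpace.comap (fun ω => L.starProjection (X ω)) inferInstance :=
  MeasurableSpace.comap_le_comap_of_eq_comp _ K.starProjection.continuous.measurable <|
    funext fun ω =>
      congrArg Subtype.val (Submodule.orthogonalProjectionOnto_starProjection_of_le hKL (X ω)).symm

theorem comap_le_sup_comap_starProjection_orthogonal [SecondCountableTopology E]
    (K : Submodule ℝ E) [K.HasOrthogonalProjection] :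
    MeasurableSpace.comap X inferInstance ≤
      MeasurableSpace.comap (fun ω => K.starProjection (X ω)) inferInstance ⊔
        MeasurableSpace.comap (fun ω => Kᗮ.starProjection (X ω)) inferInstance := by
  have h_sum : Measurable[MeasurableSpace.comap (fun ω => K.starProjection (X ω)) inferInstance ⊔
      MeasurableSpace.comap (fun ω => Kᗮ.starProjection (X ω)) inferInstance]
      fun ω => K.starProjection (X ω) + Kᗮ.starProjection (X ω) :=
    ((comap_measurable _).mono le_sup_left le_rfl).add
      ((comap_measurable _).mono le_sup_right le_rfl)
  simpa only [Submodule.starProjection_add_starProjection_orthogonal] using h_sum.comap_le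

end OrthogonalProjection

/-- Let `S₀` be the central subspace of the regression of `Y` on `X`: a
dimension-reduction subspace contained in every dimension-reduction subspace.  Then for any
subspace `H` of `ℝ^p`, the coordinate hypothesis `P_H S₀ = {0}` (equivalently `S₀ ⊆ Hᗮ`)
holds if and only if `Y` and `P_H X` are conditionally independent given the σ-algebra
generated by `Q_H X` (the orthogonal projection of `X` onto `Hᗮ`). -/
theorem stmt_0 {p : ℕ} {Ω : Type*} [MeasurableSpace Ω] [StandardBorelSpace Ω]
    (μ : Measure Ω) [IsProbabilityMeasure μ]
    (X : Ω → EuclideanSpace ℝ (Fin p)) (Y : Ω → ℝ)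
    (hX : Measurable X) (hY : Measurable Y)
    (S₀ : Submodule ℝ (EuclideanSpace ℝ (Fin p)))
    (hS₀ : IsDRS μ X Y hX S₀)
    (hmin : ∀ S : Submodule ℝ (EuclideanSpace ℝ (Fin p)), IsDRS μ X Y hX S → S₀ ≤ S)
    (H : Submodule ℝ (EuclideanSpace ℝ (Fin p))) :
    S₀ ≤ Hᗮ ↔
      CondIndepFun
        (MeasurableSpace.comap
          (fun ω => ((Submodule.orthogonalProjectionOnto Hᗮ (X ω) : Hᗮ) : EuclideanSpace ℝ (Fin p)))
          inferInstance)
        (Measurable.comap_le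
          ((continuous_subtype_val.comp
            (Submodule.orthogonalProjectionOnto Hᗮ).continuous).measurable.comp hX))
        Y (fun ω => ((Submodule.orthogonalProjectionOnto H (X ω) : H) : EuclideanSpace ℝ (Fin p))) μ := by
  constructor
  · intro hle
    exact hS₀.of_comap_le_sup hY hX (comap_starProjection_comp_mono X hle)
      (le_sup_of_le_left (comap_starProjection_comp_le X Hᗮ))
      (le_sup_of_le_left (comap_starProjection_comp_le X H))
  · intro hci
    exact hmin Hᗮ <| hci.of_comap_le_sup hY (H.starProjection.continuous.measurable.comp hX) le_rfl
      le_sup_right (comap_le_sup_comap_starProjection_orthogonal X H)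
end

section
/- For every d with 0 ≤ d ≤ p, the minimum of Σ_{y=1}^h w_y ‖z_y − B C_y‖² over all real p×d matrices B with Bᵀ B = I_d and all C : Fin h → ℝ^d satisfying Σ_{y=1}^h w_y C_y = 0 equals Σ_{j=d+1}^p λ_j; the minimum is attained by taking the columns of B to be unit eigenvectors of M corresponding to λ_1, …, λ_d and C_y = Bᵀ z_y. -/
open Matrix Finset

-- entry form of BᵀB = 1
lemma aux_hBkl {p d : ℕ} {B : Matrix (Fin p) (Fin d) ℝ} (hB : Bᵀ * B = 1) (k l : Fin d) :
    (∑ j, B j k * B j l) = if k = l then 1 else 0 := by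
  have := congrFun (congrFun hB k) l
  simpa [Matrix.mul_apply, Matrix.one_apply, Matrix.transpose_apply] using this

-- key expansion: per-vector decomposition
lemma aux_keyA {p d : ℕ} {B : Matrix (Fin p) (Fin d) ℝ} (hB : Bᵀ * B = 1)
    (z : Fin p → ℝ) (c : Fin d → ℝ) :
    ∑ j, (z j - B.mulVec c j) ^ 2
      = ∑ j, z j ^ 2 - ∑ k, (Bᵀ.mulVec z k) ^ 2
        + ∑ k, (c k - Bᵀ.mulVec z k) ^ 2 := by
  have hq : ∀ k, Bᵀ.mulVec z k = ∑ i, B i k * z i := by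
    intro k; simp [Matrix.mulVec, dotProduct, Matrix.transpose_apply]
  have h3 : ∑ j, (B.mulVec c j) ^ 2 = ∑ k, c k ^ 2 := by
    have : ∀ j, (B.mulVec c j) ^ 2 = ∑ k, ∑ l, (c k * c l) * (B j k * B j l) := by
      intro j
      simp only [Matrix.mulVec, dotProduct, sq, Finset.sum_mul_sum]
      apply Finset.sum_congr rfl; intro k _
      apply Finset.sum_congr rfl; intro l _; ring
    rw [Finset.sum_congr rfl (fun j _ => this j)]
    rw [Finset.sum_comm]
    have : ∀ k, (∑ j : Fin p, ∑ l, (c k * c l) * (B j k * B j l)) = c k ^ 2 := by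
      intro k
      rw [Finset.sum_comm]
      have : ∀ l, (∑ j : Fin p, (c k * c l) * (B j k * B j l))
          = (c k * c l) * if k = l then 1 else 0 := by
        intro l
        rw [← Finset.mul_sum, aux_hBkl hB]
      rw [Finset.sum_congr rfl (fun l _ => this l)]
      simp [sq]
    rw [Finset.sum_congr rfl (fun k _ => this k)]
  have h2 : ∑ j, z j * B.mulVec c j = ∑ k, c k * Bᵀ.mulVec z k := by
    simp only [Matrix.mulVec, dotProduct, Finset.mul_sum, Matrix.transpose_apply]
    rw [Finset.sum_comm]
    apply Finset.sum_congr rfl; intro k _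
    apply Finset.sum_congr rfl; intro l _; ring
  have e1 : ∑ j, (z j - B.mulVec c j) ^ 2
      = ∑ j, z j ^ 2 - 2 * (∑ j, z j * B.mulVec c j) + ∑ j, (B.mulVec c j) ^ 2 := by
    rw [Finset.mul_sum, ← Finset.sum_sub_distrib, ← Finset.sum_add_distrib]
    apply Finset.sum_congr rfl; intro j _; ring
  have e2 : ∑ k, (c k - Bᵀ.mulVec z k) ^ 2
      = ∑ k, c k ^ 2 - 2 * (∑ k, c k * Bᵀ.mulVec z k) + ∑ k, (Bᵀ.mulVec z k) ^ 2 := by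
    rw [Finset.mul_sum, ← Finset.sum_sub_distrib, ← Finset.sum_add_distrib]
    apply Finset.sum_congr rfl; intro k _; ring
  rw [e1, e2, h2, h3]; ring

-- Ky Fan style bound
lemma aux_kyfan {p d : ℕ} (hd : d ≤ p) (lam : Fin p → ℝ) (hlam : Antitone lam)
    (hlam0 : ∀ j, 0 ≤ lam j) (s : Fin p → ℝ) (hs0 : ∀ j, 0 ≤ s j) (hs1 : ∀ j, s j ≤ 1)
    (hsum : ∑ j, s j = d) :
    ∑ j, lam j * s j ≤ ∑ j ∈ Finset.univ.filter (fun j : Fin p => (j : ℕ) < d), lam j := by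
  set A := Finset.univ.filter (fun j : Fin p => (j : ℕ) < d) with hA
  have hcard : (A.card : ℝ) = d := by
    rcases lt_or_eq_of_le hd with hdp | hdp
    · have : A = Finset.Iio (⟨d, hdp⟩ : Fin p) := by
        ext j; simp [hA, Fin.lt_def]
      rw [this, Fin.card_Iio]
    · have : A = Finset.univ := by
        ext j; simp [hA]; omega
      rw [this]; simp [hdp]
  set t : ℝ := if hdp : d < p then lam ⟨d, hdp⟩ else 0 with ht
  have htA : ∀ j ∈ A, t ≤ lam j := by
    intro j hj
    simp only [hA, Finset.mem_filter] at hj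
    by_cases hdp : d < p
    · simp only [ht, dif_pos hdp]
      exact hlam (by simp [Fin.le_def]; omega)
    · simp only [ht, dif_neg hdp]; exact hlam0 j
  have htAc : ∀ j ∈ Finset.univ.filter (fun j : Fin p => ¬ (j : ℕ) < d), lam j ≤ t := by
    intro j hj
    simp only [Finset.mem_filter] at hj
    have hdp : d < p := lt_of_le_of_lt (by omega : d ≤ (j:ℕ)) j.isLt
    simp only [ht, dif_pos hdp]
    exact hlam (by simp [Fin.le_def]; omega)
  have split1 : ∑ j, lam j * s j
      = ∑ j ∈ A, lam j * s j + ∑ j ∈ Finset.univ.filter (fun j : Fin p => ¬ (j : ℕ) < d), lam j * s j :=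
    (Finset.sum_filter_add_sum_filter_not _ _ _).symm
  have splits : ∑ j, s j
      = ∑ j ∈ A, s j + ∑ j ∈ Finset.univ.filter (fun j : Fin p => ¬ (j : ℕ) < d), s j :=
    (Finset.sum_filter_add_sum_filter_not _ _ _).symm
  have b1 : ∑ j ∈ A, lam j * s j ≤ ∑ j ∈ A, (lam j - t) + t * ∑ j ∈ A, s j := by
    rw [Finset.mul_sum, ← Finset.sum_add_distrib]
    apply Finset.sum_le_sum; intro j hj
    have h1 := htA j hj; have h2 := hs1 j; have h3 := hs0 j
    nlinarith
  have b2 : ∑ j ∈ Finset.univ.filter (fun j : Fin p => ¬ (j : ℕ) < d), lam j * s j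
      ≤ t * ∑ j ∈ Finset.univ.filter (fun j : Fin p => ¬ (j : ℕ) < d), s j := by
    rw [Finset.mul_sum]
    apply Finset.sum_le_sum; intro j hj
    have h1 := htAc j hj; have h3 := hs0 j
    nlinarith
  have hsa : ∑ j ∈ A, s j + ∑ j ∈ Finset.univ.filter (fun j : Fin p => ¬ (j : ℕ) < d), s j = d := by
    rw [← splits, hsum]
  have hAt : ∑ j ∈ A, (lam j - t) = ∑ j ∈ A, lam j - t * d := by
    rw [Finset.sum_sub_distrib, Finset.sum_const, ← hcard]; ring_nf
  have hmul : t * ∑ j ∈ A, s j + t * ∑ j ∈ Finset.univ.filter (fun j : Fin p => ¬ (j : ℕ) < d), s j = t * d := by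
    rw [← mul_add, hsa]
  linarith [split1, b1, b2, hsa, hAt, hmul]

-- sum over filter complement split, in the needed direction
lemma aux_keyC {p d h : ℕ} (z : Fin h → Fin p → ℝ) (w : Fin h → ℝ)
    (lam : Fin p → ℝ) (V : Matrix (Fin p) (Fin p) ℝ)
    (hMe : ∀ i i', ∑ y, w y * (z y i * z y i') = ∑ j, V i j * lam j * V i' j)
    (B : Matrix (Fin p) (Fin d) ℝ) :
    ∑ y, w y * ∑ k, (Bᵀ.mulVec (z y) k) ^ 2
      = ∑ j, lam j * ∑ k, ((Vᵀ * B) j k) ^ 2 := by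
  have e1 : ∀ y, w y * ∑ k, (Bᵀ.mulVec (z y) k) ^ 2
      = ∑ k, ∑ i, ∑ i', (B i k * B i' k) * (w y * (z y i * z y i')) := by
    intro y
    rw [Finset.mul_sum]
    apply Finset.sum_congr rfl; intro k _
    have : Bᵀ.mulVec (z y) k = ∑ i, B i k * z y i := by
      simp [Matrix.mulVec, dotProduct, Matrix.transpose_apply]
    rw [this, sq, Finset.sum_mul_sum, Finset.mul_sum]
    apply Finset.sum_congr rfl; intro i _
    rw [Finset.mul_sum]
    apply Finset.sum_congr rfl; intro i' _; ring
  rw [Finset.sum_congr rfl (fun y _ => e1 y)]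
  have e2 : ∑ y, ∑ k, ∑ i, ∑ i', (B i k * B i' k) * (w y * (z y i * z y i'))
      = ∑ k, ∑ i, ∑ i', (B i k * B i' k) * (∑ y, w y * (z y i * z y i')) := by
    rw [Finset.sum_comm]
    apply Finset.sum_congr rfl; intro k _
    rw [Finset.sum_comm]
    apply Finset.sum_congr rfl; intro i _
    rw [Finset.sum_comm]
    apply Finset.sum_congr rfl; intro i' _
    rw [← Finset.mul_sum]
  rw [e2]
  have e3 : ∀ i i' : Fin p, ∀ k : Fin d, (B i k * B i' k) * (∑ y, w y * (z y i * z y i'))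
      = ∑ j, (B i k * V i j) * (lam j * (B i' k * V i' j)) := by
    intro i i' k
    rw [hMe i i', Finset.mul_sum]
    apply Finset.sum_congr rfl; intro j _; ring
  calc ∑ k, ∑ i, ∑ i', (B i k * B i' k) * (∑ y, w y * (z y i * z y i'))
      = ∑ k, ∑ i, ∑ i', ∑ j, (B i k * V i j) * (lam j * (B i' k * V i' j)) := by
        apply Finset.sum_congr rfl; intro k _
        apply Finset.sum_congr rfl; intro i _
        apply Finset.sum_congr rfl; intro i' _
        exact e3 i i' k
    _ = ∑ k, ∑ i, ∑ j, ∑ i', (B i k * V i j) * (lam j * (B i' k * V i' j)) := by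
        apply Finset.sum_congr rfl; intro k _
        apply Finset.sum_congr rfl; intro i _
        rw [Finset.sum_comm]
    _ = ∑ k, ∑ j, ∑ i, ∑ i', (B i k * V i j) * (lam j * (B i' k * V i' j)) := by
        apply Finset.sum_congr rfl; intro k _
        rw [Finset.sum_comm]
    _ = ∑ j, ∑ k, ∑ i, ∑ i', (B i k * V i j) * (lam j * (B i' k * V i' j)) :=
        by rw [Finset.sum_comm]
    _ = ∑ j, lam j * ∑ k, ((Vᵀ * B) j k) ^ 2 := by
        apply Finset.sum_congr rfl; intro j _
        rw [Finset.mul_sum]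
        apply Finset.sum_congr rfl; intro k _
        have hQ : (Vᵀ * B) j k = ∑ i, B i k * V i j := by
          simp [Matrix.mul_apply, Matrix.transpose_apply, mul_comm]
        rw [hQ, sq, Finset.sum_mul_sum, Finset.mul_sum]
        apply Finset.sum_congr rfl; intro i _
        rw [Finset.mul_sum]
        apply Finset.sum_congr rfl; intro i' _; ring

/-- Let `z_1,…,z_h ∈ ℝ^p`, weights `w_y > 0` with `Σ w_y z_y = 0`, and let
`M = Σ w_y z_y z_yᵀ` have eigendecomposition `M = V (diag lam) Vᵀ` with `V` orthogonal and the
eigenvalues `lam` in decreasing order.  For every `d ≤ p`, the minimum of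
`Σ_y w_y ‖z_y - B C_y‖²` over `p×d` matrices `B` with `BᵀB = I_d` and `C : Fin h → ℝ^d` with
`Σ w_y C_y = 0` equals `Σ_{j>d} lam_j`, and it is attained by taking the columns of `B` to be
the unit eigenvectors of `M` corresponding to `lam_1,…,lam_d` (the first `d` columns of `V`)
and `C_y = Bᵀ z_y`. -/
theorem stmt_6 {p h : ℕ} (d : ℕ) (hd : d ≤ p)
    (z : Fin h → Fin p → ℝ) (w : Fin h → ℝ) (hw : ∀ y, 0 < w y)
    (hz : ∑ y, w y • z y = 0)
    (lam : Fin p → ℝ) (V : Matrix (Fin p) (Fin p) ℝ)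
    (hV : Vᵀ * V = 1) (hlam : Antitone lam)
    (hM : ∑ y, w y • vecMulVec (z y) (z y) = V * Matrix.diagonal lam * Vᵀ) :
    IsLeast
      {v : ℝ | ∃ (B : Matrix (Fin p) (Fin d) ℝ) (C : Fin h → Fin d → ℝ),
        Bᵀ * B = 1 ∧ (∑ y, w y • C y) = 0 ∧
        v = ∑ y, w y * ∑ j, (z y j - B.mulVec (C y) j) ^ 2}
      (∑ j ∈ Finset.univ.filter fun j : Fin p => d ≤ (j : ℕ), lam j) ∧
    (∑ y, w y * ∑ j,
        (z y j - (V.submatrix id (Fin.castLE hd)).mulVec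
          ((V.submatrix id (Fin.castLE hd))ᵀ.mulVec (z y)) j) ^ 2)
      = ∑ j ∈ Finset.univ.filter fun j : Fin p => d ≤ (j : ℕ), lam j := by
  have hVe : ∀ j l : Fin p, (∑ i, V i j * V i l) = if j = l then 1 else 0 :=
    aux_hBkl hV
  have hVVt : V * Vᵀ = 1 := mul_eq_one_comm.mp hV
  -- entrywise M
  have hMe : ∀ i i', ∑ y, w y * (z y i * z y i') = ∑ j, V i j * lam j * V i' j := by
    intro i i'
    have := congrFun (congrFun hM i) i'
    simp only [Matrix.sum_apply, Matrix.smul_apply, vecMulVec_apply, smul_eq_mul,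
      Matrix.mul_apply, Matrix.mul_diagonal, Matrix.transpose_apply] at this
    rw [this]
    have inner : ∀ x, (∑ j, V i j * Matrix.diagonal lam j x) = V i x * lam x := by
      intro x
      simp [Matrix.diagonal_apply, mul_ite, Finset.sum_ite_eq]
    rw [Finset.sum_congr rfl fun x _ => by rw [inner x]]
  -- trace identity
  have htr : ∑ y, w y * ∑ i, (z y i) ^ 2 = ∑ j, lam j := by
    calc ∑ y, w y * ∑ i, (z y i) ^ 2 = ∑ y, ∑ i, w y * (z y i * z y i) := by
          apply Finset.sum_congr rfl; intro y _
          rw [Finset.mul_sum]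
          apply Finset.sum_congr rfl; intro i _; ring
      _ = ∑ i, ∑ y, w y * (z y i * z y i) := by rw [Finset.sum_comm]
      _ = ∑ i, ∑ j, V i j * lam j * V i j := by
          exact Finset.sum_congr rfl fun i _ => hMe i i
      _ = ∑ j, ∑ i, V i j * lam j * V i j := by rw [Finset.sum_comm]
      _ = ∑ j, lam j := by
          apply Finset.sum_congr rfl; intro j _
          have : ∑ i, V i j * lam j * V i j = lam j * ∑ i, V i j * V i j := by
            rw [Finset.mul_sum]
            apply Finset.sum_congr rfl; intro i _; ring
          rw [this, hVe j j]; simp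
  -- nonnegativity of eigenvalues
  have hlam0 : ∀ j, 0 ≤ lam j := by
    intro j
    have hkc := aux_keyC z w lam V hMe (Matrix.of fun i (_ : Fin 1) => V i j)
    have hrhs : ∑ l, lam l * ∑ k : Fin 1, ((Vᵀ * Matrix.of fun i (_ : Fin 1) => V i j) l k) ^ 2
        = lam j := by
      have : ∀ l : Fin p, ∑ k : Fin 1, ((Vᵀ * Matrix.of fun i (_ : Fin 1) => V i j) l k) ^ 2
          = (if l = j then (1:ℝ) else 0) := by
        intro l
        have he : (Vᵀ * Matrix.of fun i (_ : Fin 1) => V i j) l 0 = ∑ i, V i l * V i j := by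
          simp [Matrix.mul_apply, Matrix.transpose_apply]
        rw [Fin.sum_univ_one, he, hVe l j]
        by_cases hlj : l = j <;> simp [hlj]
      rw [Finset.sum_congr rfl fun l _ => by rw [this l]]
      simp
    rw [hrhs] at hkc
    rw [← hkc]
    apply Finset.sum_nonneg; intro y _
    exact mul_nonneg (hw y).le (Finset.sum_nonneg fun k _ => sq_nonneg _)
  -- general lower bound machinery, for any B with BᵀB = 1
  have main_bound : ∀ B : Matrix (Fin p) (Fin d) ℝ, Bᵀ * B = 1 →
      ∑ j, lam j * ∑ k, ((Vᵀ * B) j k) ^ 2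
        ≤ ∑ j ∈ Finset.univ.filter (fun j : Fin p => (j : ℕ) < d), lam j := by
    intro B hB
    set Q := Vᵀ * B with hQdef
    have hQtQ : Qᵀ * Q = 1 := by
      rw [hQdef, Matrix.transpose_mul, Matrix.transpose_transpose,
        Matrix.mul_assoc Bᵀ V (Vᵀ * B), ← Matrix.mul_assoc V Vᵀ B, hVVt, Matrix.one_mul, hB]
    have hQkl : ∀ k l, (∑ j, Q j k * Q j l) = if k = l then 1 else 0 := aux_hBkl hQtQ
    set s : Fin p → ℝ := fun j => ∑ k, (Q j k) ^ 2 with hsdef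
    have hs0 : ∀ j, 0 ≤ s j := fun j => Finset.sum_nonneg fun k _ => sq_nonneg _
    have hsum : ∑ j, s j = (d : ℝ) := by
      calc ∑ j, ∑ k, (Q j k) ^ 2 = ∑ k, ∑ j, (Q j k) ^ 2 := by rw [Finset.sum_comm]
        _ = ∑ k : Fin d, (1 : ℝ) := by
            apply Finset.sum_congr rfl; intro k _
            have : ∑ j, (Q j k) ^ 2 = ∑ j, Q j k * Q j k := by
              apply Finset.sum_congr rfl; intro j _; ring
            rw [this, hQkl k k]; simp
        _ = (d : ℝ) := by simp
    have hs1 : ∀ j, s j ≤ 1 := by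
      intro j
      set P := Q * Qᵀ with hPdef
      have hPsymm : ∀ a b, P a b = P b a := by
        intro a b
        simp [hPdef, Matrix.mul_apply, Matrix.transpose_apply, mul_comm]
      have hPjj : P j j = s j := by
        simp only [hPdef, Matrix.mul_apply, Matrix.transpose_apply, hsdef]
        apply Finset.sum_congr rfl; intro k _; ring
      have hPP : P * P = P := by
        rw [hPdef, Matrix.mul_assoc Q Qᵀ (Q * Qᵀ), ← Matrix.mul_assoc Qᵀ Q Qᵀ, hQtQ, Matrix.one_mul]
      have h1 : s j = ∑ k, (P j k) ^ 2 := by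
        have := congrFun (congrFun hPP j) j
        rw [hPjj] at this
        rw [← this, Matrix.mul_apply]
        apply Finset.sum_congr rfl; intro k _
        rw [hPsymm k j]; ring
      have h2 : (s j) ^ 2 ≤ s j := by
        calc (s j)^2 = (P j j)^2 := by rw [hPjj]
          _ ≤ ∑ k, (P j k) ^ 2 := Finset.single_le_sum (f := fun k => (P j k) ^ 2)
                (fun k _ => sq_nonneg _) (Finset.mem_univ j)
          _ = s j := h1.symm
      nlinarith [hs0 j, sq_nonneg (s j - 1)]
    exact aux_kyfan hd lam hlam hlam0 s hs0 hs1 hsum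
  -- filter complement
  have hfilter : (Finset.univ.filter fun j : Fin p => d ≤ (j : ℕ))
      = Finset.univ.filter (fun j : Fin p => ¬ (j : ℕ) < d) := by
    apply Finset.filter_congr; intro j _; simp [not_lt]
  have hsplit : ∑ j ∈ Finset.univ.filter (fun j : Fin p => (j : ℕ) < d), lam j
      + ∑ j ∈ Finset.univ.filter fun j : Fin p => d ≤ (j : ℕ), lam j = ∑ j, lam j := by
    rw [hfilter]
    exact Finset.sum_filter_add_sum_filter_not _ _ _
  -- the canonical B₀ and its value
  set B₀ : Matrix (Fin p) (Fin d) ℝ := V.submatrix id (Fin.castLE hd) with hB₀def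
  have hB₀ : B₀ᵀ * B₀ = 1 := by
    ext k l
    have e : (B₀ᵀ * B₀) k l = ∑ i, V i (Fin.castLE hd k) * V i (Fin.castLE hd l) := by
      simp [hB₀def, Matrix.mul_apply, Matrix.transpose_apply, Matrix.submatrix_apply]
    rw [e, hVe]
    simp [Matrix.one_apply, Fin.castLE_inj]
  -- value of attained configuration
  have hQ₀ : ∀ (j : Fin p) (k : Fin d),
      (Vᵀ * B₀) j k = if j = Fin.castLE hd k then 1 else 0 := by
    intro j k
    have : (Vᵀ * B₀) j k = ∑ i, V i j * V i (Fin.castLE hd k) := by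
      simp [hB₀def, Matrix.mul_apply, Matrix.transpose_apply, Matrix.submatrix_apply]
    rw [this, hVe]
  have hs₀ : ∀ j : Fin p, ∑ k, ((Vᵀ * B₀) j k) ^ 2 = if (j : ℕ) < d then 1 else 0 := by
    intro j
    by_cases hj : (j : ℕ) < d
    · rw [if_pos hj]
      have : ∀ k : Fin d, ((Vᵀ * B₀) j k) ^ 2 = if (⟨(j : ℕ), hj⟩ : Fin d) = k then 1 else 0 := by
        intro k
        rw [hQ₀ j k]
        by_cases hk : (⟨(j : ℕ), hj⟩ : Fin d) = k
        · have hjk : j = Fin.castLE hd k := by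
            rw [Fin.ext_iff, ← hk]
            simp
          simp [hjk, hk]
        · have hjk : j ≠ Fin.castLE hd k := by
            intro hcon
            apply hk
            rw [Fin.ext_iff] at hcon ⊢
            simpa using hcon
          simp [hjk, hk]
      rw [Finset.sum_congr rfl fun k _ => this k]
      simp
    · rw [if_neg hj]
      apply Finset.sum_eq_zero; intro k _
      have : j ≠ Fin.castLE hd k := by
        intro hcon
        apply hj
        rw [Fin.ext_iff] at hcon
        simp at hcon
        omega
      rw [hQ₀ j k, if_neg this]
      norm_num
  have hlamS₀ : ∑ j, lam j * ∑ k, ((Vᵀ * B₀) j k) ^ 2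
      = ∑ j ∈ Finset.univ.filter (fun j : Fin p => (j : ℕ) < d), lam j := by
    rw [Finset.sum_congr rfl fun j _ => by rw [hs₀ j]]
    rw [Finset.sum_filter]
    apply Finset.sum_congr rfl; intro j _
    by_cases hj : (j : ℕ) < d <;> simp [hj]
  have hattain : (∑ y, w y * ∑ j,
        (z y j - B₀.mulVec (B₀ᵀ.mulVec (z y)) j) ^ 2)
      = ∑ j ∈ Finset.univ.filter fun j : Fin p => d ≤ (j : ℕ), lam j := by
    have e : ∀ y, ∑ j, (z y j - B₀.mulVec (B₀ᵀ.mulVec (z y)) j) ^ 2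
        = ∑ j, (z y j) ^ 2 - ∑ k, (B₀ᵀ.mulVec (z y) k) ^ 2 := by
      intro y
      have := aux_keyA hB₀ (z y) (B₀ᵀ.mulVec (z y))
      simpa using this
    rw [Finset.sum_congr rfl fun y _ => by rw [e y]]
    have : ∑ y, w y * (∑ j, (z y j) ^ 2 - ∑ k, (B₀ᵀ.mulVec (z y) k) ^ 2)
        = ∑ y, w y * ∑ j, (z y j) ^ 2 - ∑ y, w y * ∑ k, (B₀ᵀ.mulVec (z y) k) ^ 2 := by
      rw [← Finset.sum_sub_distrib]
      apply Finset.sum_congr rfl; intro y _; ring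
    rw [this, htr, aux_keyC z w lam V hMe B₀, hlamS₀]
    linarith [hsplit]
  refine ⟨⟨?_, ?_⟩, hattain⟩
  · -- membership
    refine ⟨B₀, fun y => B₀ᵀ.mulVec (z y), hB₀, ?_, hattain.symm⟩
    funext k
    have hzi : ∀ i, ∑ y, w y * z y i = 0 := by
      intro i
      have := congrFun hz i
      simpa [Finset.sum_apply, Pi.smul_apply, smul_eq_mul] using this
    simp only [Finset.sum_apply, Pi.smul_apply, smul_eq_mul, Pi.zero_apply]
    have : ∀ y, w y * B₀ᵀ.mulVec (z y) k = ∑ i, B₀ i k * (w y * z y i) := by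
      intro y
      rw [Matrix.mulVec, dotProduct, Finset.mul_sum]
      apply Finset.sum_congr rfl; intro i _
      simp [Matrix.transpose_apply]; ring
    rw [Finset.sum_congr rfl fun y _ => this y, Finset.sum_comm]
    apply Finset.sum_eq_zero; intro i _
    rw [← Finset.mul_sum, hzi i, mul_zero]
  · -- lower bound
    rintro v ⟨B, C, hB, hC, rfl⟩
    have per_y : ∀ y, w y * (∑ j, (z y j) ^ 2 - ∑ k, (Bᵀ.mulVec (z y) k) ^ 2)
        ≤ w y * ∑ j, (z y j - B.mulVec (C y) j) ^ 2 := by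
      intro y
      apply mul_le_mul_of_nonneg_left _ (hw y).le
      rw [aux_keyA hB (z y) (C y)]
      have : 0 ≤ ∑ k, (C y k - Bᵀ.mulVec (z y) k) ^ 2 :=
        Finset.sum_nonneg fun k _ => sq_nonneg _
      linarith
    have step : ∑ y, w y * (∑ j, (z y j) ^ 2 - ∑ k, (Bᵀ.mulVec (z y) k) ^ 2)
        ≤ ∑ y, w y * ∑ j, (z y j - B.mulVec (C y) j) ^ 2 :=
      Finset.sum_le_sum fun y _ => per_y y
    have expand : ∑ y, w y * (∑ j, (z y j) ^ 2 - ∑ k, (Bᵀ.mulVec (z y) k) ^ 2)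
        = ∑ j, lam j - ∑ j, lam j * ∑ k, ((Vᵀ * B) j k) ^ 2 := by
      have : ∑ y, w y * (∑ j, (z y j) ^ 2 - ∑ k, (Bᵀ.mulVec (z y) k) ^ 2)
          = ∑ y, w y * ∑ j, (z y j) ^ 2 - ∑ y, w y * ∑ k, (Bᵀ.mulVec (z y) k) ^ 2 := by
        rw [← Finset.sum_sub_distrib]
        apply Finset.sum_congr rfl; intro y _; ring
      rw [this, htr, aux_keyC z w lam V hMe B]
    have := main_bound B hB
    linarith [step, expand, hsplit, this]
end

section
/- Let λ'_1 ≥ … ≥ λ'_p ≥ 0 be the eigenvalues of Q M Q. Then λ'_j = 0 for all j > p − r, and for every m with 0 ≤ m ≤ p − r the minimum of Σ_{y=1}^h w_y ‖Q z_y − B C_y‖² over all real p×m matrices B with Bᵀ B = I_m and Q B = B and all C : Fin h → ℝ^m equals Σ_{j=m+1}^{p−r} λ'_j; the minimum is attained by C_y = Bᵀ Q z_y with the columns of B equal to unit eigenvectors of Q M Q corresponding to λ'_1, …, λ'_m. -/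
/-!
With `u_y = Q z_y`, the matrix `S = Q M Q = Σ w_y u_y u_yᵀ = V diag(λ') Vᵀ` is positive
semidefinite of rank at most `rank Q = p - r`, so `λ' ≥ 0` vanishes beyond index `p - r`.
For `B` with orthonormal columns, Pythagoras splits the residual as
`tr S - tr (Bᵀ S B) + Σ w_y ‖Bᵀ u_y - C_y‖²`, so the problem is to maximise `tr (Bᵀ S B)`;
by Ky Fan's maximum principle the maximum over all such `B` is `λ'_1 + … + λ'_m`, attained by
the first `m` columns of `V`. The constraint `Q B = B` costs nothing: as `Q S = S`, an
eigenbasis of `S + Q` sorted by eigenvalue diagonalises `S` and its first `rank Q` vectors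
lie in `range Q`; comparing the two diagonalisations of `S` through Ky Fan shows that its
first `m` vectors attain the same maximum.
-/

open Matrix Finset

lemma Antitone.ne_zero_iff_lt_card {p : ℕ} {f : Fin p → ℝ} (hf : Antitone f)
    (hf0 : ∀ j, 0 ≤ f j) (j : Fin p) :
    f j ≠ 0 ↔ (j : ℕ) < Fintype.card {i // f i ≠ 0} := by
  rw [Fintype.card_subtype]
  constructor
  · intro hj
    have hsub : Iic j ⊆ univ.filter (fun i => f i ≠ 0) := fun i hi => by
      have := hf (mem_Iic.mp hi)
      simp only [mem_filter, mem_univ, true_and]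
      exact (lt_of_lt_of_le ((hf0 j).lt_of_ne' hj) this).ne'
    have := card_le_card hsub
    rw [Fin.card_Iic] at this
    omega
  · intro hj hj0
    have hsub : univ.filter (fun i => f i ≠ 0) ⊆ Iio j := fun i hi => by
      simp only [mem_filter, mem_univ, true_and] at hi
      by_contra hij
      exact hi (le_antisymm (hj0 ▸ hf (not_lt.mp (mem_Iio.not.mp hij))) (hf0 i))
    have := card_le_card hsub
    rw [Fin.card_Iio] at this
    omega

lemma Antitone.sum_mul_le_sum_filter_lt {p m : ℕ} {lam s : Fin p → ℝ} (hlam : Antitone lam)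
    (hs0 : ∀ j, 0 ≤ s j) (hs1 : ∀ j, s j ≤ 1) (hs : ∑ j, s j = m) :
    ∑ j, lam j * s j ≤ ∑ j ∈ univ.filter (fun j : Fin p => (j : ℕ) < m), lam j := by
  have hmp : m ≤ p := by
    have : ∑ j, s j ≤ ∑ _j : Fin p, (1 : ℝ) := sum_le_sum fun j _ => hs1 j
    rw [hs, sum_const, card_univ, Fintype.card_fin, nsmul_one] at this
    exact_mod_cast this
  rcases Nat.eq_zero_or_pos p with rfl | hp
  · simp
  -- `t` is the `m`-th largest value, or the smallest one when `m = p`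
  set t := lam ⟨min m (p - 1), by omega⟩
  set e : Fin p → ℝ := fun j => if (j : ℕ) < m then 1 else 0
  have he : ∑ j, e j = m := by
    rw [sum_boole, Fin.card_filter_val_lt, min_eq_right hmp]
  have key : ∀ j, lam j * s j ≤ lam j * e j + t * (s j - e j) := by
    intro j
    by_cases hj : (j : ℕ) < m
    · have : t ≤ lam j := hlam (Fin.mk_le_mk.mpr (by omega))
      simp only [e, if_pos hj]
      nlinarith [hs1 j]
    · have : lam j ≤ t := hlam (Fin.mk_le_mk.mpr (by omega))
      simp only [e, if_neg hj]
      nlinarith [hs0 j]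
  calc ∑ j, lam j * s j ≤ ∑ j, (lam j * e j + t * (s j - e j)) := sum_le_sum fun j _ => key j
    _ = ∑ j ∈ univ.filter (fun j : Fin p => (j : ℕ) < m), lam j := by
      rw [sum_add_distrib, ← mul_sum, sum_sub_distrib, hs, he, sub_self, mul_zero, add_zero,
        sum_filter]
      simp only [e, mul_ite, mul_one, mul_zero]

section OrthonormalColumns

variable {n k : Type*} [Fintype n] [Fintype k]

lemma sum_sq_row_le_one [DecidableEq k] {G : Matrix n k ℝ} (hG : Gᵀ * G = 1) (j : n) :
    ∑ i, G j i ^ 2 ≤ 1 := by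
  set P := G * Gᵀ
  have hPjj : P j j = ∑ i, G j i ^ 2 := by
    simp only [P, mul_apply, transpose_apply, sq]
  -- `P` is symmetric and idempotent, so `P j j = ∑ l, P j l ^ 2 ≥ P j j ^ 2`
  have hPP : P * P = P := by
    simp only [P, Matrix.mul_assoc, ← Matrix.mul_assoc Gᵀ, hG, Matrix.one_mul]
  have hsq : P j j ^ 2 ≤ P j j := by
    calc P j j ^ 2 ≤ ∑ l, P j l ^ 2 :=
          single_le_sum (f := fun l => P j l ^ 2) (fun l _ => sq_nonneg _) (mem_univ j)
      _ = P j j := by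
        conv_rhs => rw [← hPP, mul_apply]
        refine sum_congr rfl fun l _ => ?_
        rw [sq, show P l j = P j l by simp only [P, mul_apply, transpose_apply, mul_comm]]
  have : 0 ≤ P j j := hPjj ▸ sum_nonneg fun i _ => sq_nonneg _
  nlinarith

lemma sum_sum_sq_eq_card [DecidableEq k] {G : Matrix n k ℝ} (hG : Gᵀ * G = 1) :
    ∑ j, ∑ i, G j i ^ 2 = Fintype.card k := by
  rw [← trace_one (n := k) (R := ℝ), ← hG, trace, sum_comm]
  simp only [diag_apply, mul_apply, transpose_apply, sq]

lemma trace_transpose_mul_diagonal_mul [DecidableEq n] (G : Matrix n k ℝ) (d : n → ℝ) :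
    trace (Gᵀ * diagonal d * G) = ∑ j, d j * ∑ i, G j i ^ 2 := by
  simp only [trace, diag_apply, mul_apply, transpose_apply, diagonal_apply, mul_ite, mul_zero,
    sum_ite_eq', mem_univ, if_true, mul_sum]
  rw [sum_comm]
  exact sum_congr rfl fun j _ => sum_congr rfl fun i _ => by ring

lemma trace_conj_diagonal_eq_sum [DecidableEq n] (V : Matrix n n ℝ) (d : n → ℝ)
    (B : Matrix n k ℝ) :
    trace (Bᵀ * (V * diagonal d * Vᵀ) * B) = ∑ j, d j * ∑ i, (Vᵀ * B) j i ^ 2 := by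
  rw [← trace_transpose_mul_diagonal_mul]
  simp only [transpose_mul, transpose_transpose, Matrix.mul_assoc]

end OrthonormalColumns

lemma transpose_submatrix_mul_submatrix {n k : Type*} [Fintype n] [DecidableEq n] [DecidableEq k]
    {V : Matrix n n ℝ} (hV : Vᵀ * V = 1) {f : k → n} (hf : Function.Injective f) :
    (V.submatrix id f)ᵀ * V.submatrix id f = 1 := by
  ext i j
  simpa [mul_apply, one_apply, hf.eq_iff] using congrFun (congrFun hV (f i)) (f j)

section KyFan

variable {p m : ℕ} {V : Matrix (Fin p) (Fin p) ℝ} {lam : Fin p → ℝ}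

theorem trace_conj_le_sum_filter_lt (hV : Vᵀ * V = 1) (hlam : Antitone lam)
    {B : Matrix (Fin p) (Fin m) ℝ} (hB : Bᵀ * B = 1) :
    trace (Bᵀ * (V * diagonal lam * Vᵀ) * B)
      ≤ ∑ j ∈ univ.filter (fun j : Fin p => (j : ℕ) < m), lam j := by
  have hG : (Vᵀ * B)ᵀ * (Vᵀ * B) = 1 := by
    rw [transpose_mul, transpose_transpose, Matrix.mul_assoc, ← Matrix.mul_assoc V,
      mul_eq_one_comm.mp hV, Matrix.one_mul, hB]
  rw [trace_conj_diagonal_eq_sum]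
  refine hlam.sum_mul_le_sum_filter_lt (fun j => sum_nonneg fun i _ => sq_nonneg _)
    (sum_sq_row_le_one hG) ?_
  rw [sum_sum_sq_eq_card hG, Fintype.card_fin]

lemma trace_conj_submatrix_castLE (hV : Vᵀ * V = 1) (lam : Fin p → ℝ) (hm : m ≤ p) :
    trace ((V.submatrix id (Fin.castLE hm))ᵀ * (V * diagonal lam * Vᵀ)
        * V.submatrix id (Fin.castLE hm))
      = ∑ j ∈ univ.filter (fun j : Fin p => (j : ℕ) < m), lam j := by
  have hG : Vᵀ * V.submatrix id (Fin.castLE hm)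
      = (1 : Matrix (Fin p) (Fin p) ℝ).submatrix id (Fin.castLE hm) := by
    rw [← hV]; rfl
  rw [trace_conj_diagonal_eq_sum, hG, sum_filter]
  refine sum_congr rfl fun j _ => ?_
  have hrow : ∑ i : Fin m, ((1 : Matrix (Fin p) (Fin p) ℝ) j (Fin.castLE hm i)) ^ 2
      = if (j : ℕ) < m then 1 else 0 := by
    split_ifs with hj
    · rw [sum_eq_single ⟨j, hj⟩ (fun i _ hi => ?_) (by simp)]
      · simp [one_apply]
      · simp only [Fin.ne_iff_vne] at hi
        simp [one_apply, Fin.ext_iff]; omega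
    · refine sum_eq_zero fun i _ => ?_
      simp [one_apply, Fin.ext_iff]; omega
  rw [← mul_boole]
  exact congrArg (lam j * ·) hrow

/-- Ky Fan's maximum principle. -/
theorem isGreatest_trace_conj (hV : Vᵀ * V = 1) (hlam : Antitone lam) (hm : m ≤ p) :
    IsGreatest {t | ∃ B : Matrix (Fin p) (Fin m) ℝ, Bᵀ * B = 1 ∧
        t = trace (Bᵀ * (V * diagonal lam * Vᵀ) * B)}
      (∑ j ∈ univ.filter (fun j : Fin p => (j : ℕ) < m), lam j) :=
  ⟨⟨_, transpose_submatrix_mul_submatrix hV (Fin.castLE_injective hm),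
      (trace_conj_submatrix_castLE hV lam hm).symm⟩,
    fun _ ⟨_, hB, ht⟩ => ht ▸ trace_conj_le_sum_filter_lt hV hlam hB⟩

lemma sum_filter_lt_eq_of_conj_diagonal_eq {U : Matrix (Fin p) (Fin p) ℝ} {ν : Fin p → ℝ}
    (hV : Vᵀ * V = 1) (hlam : Antitone lam) (hU : Uᵀ * U = 1) (hν : Antitone ν)
    (h : U * diagonal ν * Uᵀ = V * diagonal lam * Vᵀ) (hm : m ≤ p) :
    ∑ j ∈ univ.filter (fun j : Fin p => (j : ℕ) < m), ν j
      = ∑ j ∈ univ.filter (fun j : Fin p => (j : ℕ) < m), lam j :=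
  (isGreatest_trace_conj hU hν hm).unique (h ▸ isGreatest_trace_conj hV hlam hm)

end KyFan

section Spectral

variable {n : Type*} [Fintype n] [DecidableEq n]

lemma dotProduct_col_self_eq_one {U : Matrix n n ℝ} (hU : Uᵀ * U = 1) (j : n) :
    Uᵀ j ⬝ᵥ Uᵀ j = 1 := by
  simpa [mul_apply, dotProduct] using congrFun (congrFun hU j) j

lemma eq_conj_diagonal_iff_mulVec_col {A U : Matrix n n ℝ} (hU : Uᵀ * U = 1) (d : n → ℝ) :
    A = U * diagonal d * Uᵀ ↔ ∀ j, A *ᵥ Uᵀ j = d j • Uᵀ j := by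
  have hU' : U * Uᵀ = 1 := mul_eq_one_comm.mp hU
  calc A = U * diagonal d * Uᵀ ↔ A * U = U * diagonal d := by
        constructor
        · rintro rfl; rw [Matrix.mul_assoc, hU, Matrix.mul_one]
        · intro h; rw [← h, Matrix.mul_assoc, hU', Matrix.mul_one]
    _ ↔ ∀ j, A *ᵥ Uᵀ j = d j • Uᵀ j := by
        simp only [← Matrix.ext_iff, mul_diagonal]
        simp only [funext_iff, mulVec, dotProduct, mul_apply, transpose_apply, Pi.smul_apply,
          smul_eq_mul]
        exact ⟨fun h j i => by rw [h i j, mul_comm], fun h i j => by rw [h j i, mul_comm]⟩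

lemma Matrix.PosSemidef.nonneg_of_eq_conj_diagonal {A U : Matrix n n ℝ} (hA : A.PosSemidef)
    (hU : Uᵀ * U = 1) {d : n → ℝ} (h : A = U * diagonal d * Uᵀ) (j : n) : 0 ≤ d j := by
  have := hA.dotProduct_mulVec_nonneg (Uᵀ j)
  rwa [star_trivial, (eq_conj_diagonal_iff_mulVec_col hU d).mp h j, dotProduct_smul,
    dotProduct_col_self_eq_one hU, smul_eq_mul, mul_one] at this

lemma rank_conj_diagonal {U : Matrix n n ℝ} (hU : Uᵀ * U = 1) (d : n → ℝ) :
    (U * diagonal d * Uᵀ).rank = Fintype.card {i // d i ≠ 0} := by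
  have hUt : IsUnit Uᵀ.det := isUnit_det_of_right_inverse hU
  have hU' : IsUnit U.det := isUnit_det_of_left_inverse hU
  rw [rank_mul_eq_left_of_isUnit_det _ _ hUt, rank_mul_eq_right_of_isUnit_det _ _ hU',
    rank_diagonal]

lemma trace_conj_diagonal {U : Matrix n n ℝ} (hU : Uᵀ * U = 1) (d : n → ℝ) :
    trace (U * diagonal d * Uᵀ) = ∑ i, d i := by
  rw [trace_mul_cycle, hU, Matrix.one_mul, trace_diagonal]

end Spectral

lemma eq_zero_of_rank_conj_diagonal_le {p : ℕ} {V : Matrix (Fin p) (Fin p) ℝ}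
    {lam : Fin p → ℝ} (hV : Vᵀ * V = 1) (hlam : Antitone lam)
    (hlam0 : ∀ j, 0 ≤ lam j) {q : ℕ} (hq : (V * diagonal lam * Vᵀ).rank ≤ q) (j : Fin p)
    (hj : q ≤ (j : ℕ)) : lam j = 0 := by
  by_contra hne
  have := (hlam.ne_zero_iff_lt_card hlam0 j).mp hne
  rw [← rank_conj_diagonal hV] at this
  omega

lemma exists_perm_antitone {α : Type*} [LinearOrder α] {p : ℕ} (f : Fin p → α) :
    ∃ σ : Equiv.Perm (Fin p), Antitone (f ∘ σ) :=
  ⟨Fin.revPerm.trans (Tuple.sort f), fun _ _ hab => Tuple.monotone_sort f (Fin.rev_le_rev.mpr hab)⟩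

theorem Matrix.IsHermitian.exists_orthogonal_antitone {p : ℕ} {A : Matrix (Fin p) (Fin p) ℝ}
    (hA : A.IsHermitian) : ∃ (U : Matrix (Fin p) (Fin p) ℝ) (μ : Fin p → ℝ),
      Uᵀ * U = 1 ∧ Antitone μ ∧ A = U * diagonal μ * Uᵀ := by
  obtain ⟨σ, hσ⟩ := exists_perm_antitone hA.eigenvalues
  set U₀ := (hA.eigenvectorUnitary : Matrix (Fin p) (Fin p) ℝ)
  have hU₀ : U₀ᵀ * U₀ = 1 := by
    rw [← conjTranspose_eq_transpose_of_trivial, ← star_eq_conjTranspose]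
    exact Unitary.coe_star_mul_self _
  have hU : (U₀.submatrix id σ)ᵀ * U₀.submatrix id σ = 1 :=
    transpose_submatrix_mul_submatrix hU₀ σ.injective
  refine ⟨U₀.submatrix id σ, _, hU, hσ, (eq_conj_diagonal_iff_mulVec_col hU _).mpr fun j => ?_⟩
  exact hA.mulVec_eigenvectorBasis (σ j)

section Projection

variable {n : Type*} [Fintype n] {Q M : Matrix n n ℝ}

lemma posSemidef_of_transpose_eq_of_mul_self_eq (hQs : Qᵀ = Q) (hQi : Q * Q = Q) :
    Q.PosSemidef := by
  simpa [conjTranspose_eq_transpose_of_trivial, hQs, hQi] using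
    posSemidef_conjTranspose_mul_self Q

lemma Matrix.PosSemidef.mulVec_eq_zero_of_add (hM : M.PosSemidef) (hQ : Q.PosSemidef)
    {x : n → ℝ} (hx : (M + Q) *ᵥ x = 0) : M *ᵥ x = 0 ∧ Q *ᵥ x = 0 := by
  have hsum : star x ⬝ᵥ M *ᵥ x + star x ⬝ᵥ Q *ᵥ x = 0 := by
    rw [← dotProduct_add, ← add_mulVec, hx, dotProduct_zero]
  have hM0 := hM.dotProduct_mulVec_nonneg x
  have hQ0 := hQ.dotProduct_mulVec_nonneg x
  exact ⟨(hM.dotProduct_mulVec_zero_iff x).mp (by linarith),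
    (hQ.dotProduct_mulVec_zero_iff x).mp (by linarith)⟩

lemma rank_le_rank_of_mulVec_eq_zero {K m l : Type*} [Field K] [Fintype l] {A : Matrix m n K}
    {B : Matrix l n K} (h : ∀ x, A *ᵥ x = 0 → B *ᵥ x = 0) : B.rank ≤ A.rank := by
  have hker : LinearMap.ker A.mulVecLin ≤ LinearMap.ker B.mulVecLin := fun x hx => h x hx
  have hA := LinearMap.finrank_range_add_finrank_ker A.mulVecLin
  have hB := LinearMap.finrank_range_add_finrank_ker B.mulVecLin
  have := Submodule.finrank_mono hker
  unfold rank
  omega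

/-- Since `Q M = M`, an eigenvector of `M + Q` lies either in `ker Q ∩ ker M` or in `range Q`,
where `M + Q` acts as `M + 1`. -/
lemma eigenvector_add_projection (hQs : Qᵀ = Q) (hQi : Q * Q = Q) (hM : M.PosSemidef)
    (hQM : Q * M = M) {μ : ℝ} {x : n → ℝ} (hx : x ≠ 0) (hμ : (M + Q) *ᵥ x = μ • x) :
    (μ = 0 ∧ Q *ᵥ x = 0 ∧ M *ᵥ x = 0) ∨ (1 ≤ μ ∧ Q *ᵥ x = x ∧ M *ᵥ x = (μ - 1) • x) := by
  have hQ := posSemidef_of_transpose_eq_of_mul_self_eq hQs hQi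
  by_cases hμ0 : μ = 0
  · obtain ⟨hMx, hQx⟩ := hM.mulVec_eq_zero_of_add hQ (by rw [hμ, hμ0, zero_smul])
    exact Or.inl ⟨hμ0, hQx, hMx⟩
  have hQx : Q *ᵥ x = x := by
    have : Q *ᵥ ((M + Q) *ᵥ x) = (M + Q) *ᵥ x := by
      rw [mulVec_mulVec, Matrix.mul_add, hQM, hQi]
    rw [hμ, mulVec_smul] at this
    exact smul_right_injective _ hμ0 this
  have hMx : M *ᵥ x = (μ - 1) • x := by
    rw [sub_smul, one_smul, ← hμ, add_mulVec, hQx, add_sub_cancel_right]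
  refine Or.inr ⟨?_, hQx, hMx⟩
  have hpos : 0 < x ⬝ᵥ x := by simpa using dotProduct_star_self_pos_iff.mpr hx
  have := hM.dotProduct_mulVec_nonneg x
  rw [star_trivial, hMx, dotProduct_smul, smul_eq_mul] at this
  nlinarith

end Projection

theorem exists_orthogonal_antitone_of_projection {p : ℕ} {Q M : Matrix (Fin p) (Fin p) ℝ}
    (hQs : Qᵀ = Q) (hQi : Q * Q = Q) (hM : M.PosSemidef) (hQM : Q * M = M) :
    ∃ (U : Matrix (Fin p) (Fin p) ℝ) (ν : Fin p → ℝ), Uᵀ * U = 1 ∧ Antitone ν ∧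
      M = U * diagonal ν * Uᵀ ∧ ∀ j : Fin p, (j : ℕ) < Q.rank → Q *ᵥ Uᵀ j = Uᵀ j := by
  have hQ := posSemidef_of_transpose_eq_of_mul_self_eq hQs hQi
  obtain ⟨U, μ, hU, hμ, hA⟩ := IsHermitian.exists_orthogonal_antitone (hM.add hQ).isHermitian
  have heig : ∀ j, (μ j = 0 ∧ Q *ᵥ Uᵀ j = 0 ∧ M *ᵥ Uᵀ j = 0) ∨
      (1 ≤ μ j ∧ Q *ᵥ Uᵀ j = Uᵀ j ∧ M *ᵥ Uᵀ j = (μ j - 1) • Uᵀ j) := fun j =>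
    eigenvector_add_projection hQs hQi hM hQM
      (fun h0 => by simpa [h0] using dotProduct_col_self_eq_one hU j)
      ((eq_conj_diagonal_iff_mulVec_col hU μ).mp hA j)
  -- on the `j`-th eigenvector of `M + Q`, `M` acts as `max (μ j - 1) 0`, monotone in `μ j`
  refine ⟨U, fun j => max (μ j - 1) 0, hU,
    fun a b hab => max_le_max_right 0 (by linarith [hμ hab]),
    (eq_conj_diagonal_iff_mulVec_col hU _).mpr fun j => ?_, fun j hj => ?_⟩
  · rcases heig j with ⟨h0, -, hMx⟩ | ⟨h1, -, hMx⟩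
    · simp [hMx, h0]
    · rw [hMx, max_eq_left (by linarith)]
  · have hrank : Q.rank ≤ Fintype.card {i // μ i ≠ 0} := by
      rw [← rank_conj_diagonal hU, ← hA]
      exact rank_le_rank_of_mulVec_eq_zero fun x hx => (hM.mulVec_eq_zero_of_add hQ hx).2
    have hμ0 : ∀ i, 0 ≤ μ i := fun i => by
      rcases heig i with ⟨h0, -⟩ | ⟨h1, -⟩ <;> linarith
    rcases heig j with ⟨h0, -⟩ | ⟨-, hQx, -⟩
    · exact absurd h0 ((hμ.ne_zero_iff_lt_card hμ0 j).mpr (by omega))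
    · exact hQx

theorem exists_orthonormal_mul_eq_of_projection {p m : ℕ} {V : Matrix (Fin p) (Fin p) ℝ}
    {lam : Fin p → ℝ} {Q S : Matrix (Fin p) (Fin p) ℝ}
    (hQs : Qᵀ = Q) (hQi : Q * Q = Q) (hS : S.PosSemidef) (hQS : Q * S = S) (hV : Vᵀ * V = 1)
    (hlam : Antitone lam) (hSV : S = V * diagonal lam * Vᵀ) (hm : m ≤ Q.rank) :
    ∃ B : Matrix (Fin p) (Fin m) ℝ, Bᵀ * B = 1 ∧ Q * B = B ∧
      trace (Bᵀ * S * B) = ∑ j ∈ univ.filter (fun j : Fin p => (j : ℕ) < m), lam j := by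
  obtain ⟨U, ν, hU, hν, hSU, hQU⟩ := exists_orthogonal_antitone_of_projection hQs hQi hS hQS
  have hmp : m ≤ p := hm.trans (rank_le_width Q)
  refine ⟨U.submatrix id (Fin.castLE hmp), transpose_submatrix_mul_submatrix hU
    (Fin.castLE_injective hmp), ?_, ?_⟩
  · ext k i
    simpa [mulVec, dotProduct, mul_apply] using
      congrFun (hQU (Fin.castLE hmp i) (i.2.trans_le hm)) k
  · rw [hSU, trace_conj_submatrix_castLE hU ν hmp]
    exact sum_filter_lt_eq_of_conj_diagonal_eq hV hlam hU hν (hSU ▸ hSV) hmp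

lemma sum_filter_Ico_eq_sum_sub {p m q : ℕ} {f : Fin p → ℝ}
    (hf : ∀ j : Fin p, q ≤ (j : ℕ) → f j = 0) :
    ∑ j ∈ univ.filter (fun j : Fin p => m ≤ (j : ℕ) ∧ (j : ℕ) < q), f j
      = ∑ j, f j - ∑ j ∈ univ.filter (fun j : Fin p => (j : ℕ) < m), f j := by
  rw [eq_sub_iff_add_eq, sum_filter, sum_filter, ← sum_add_distrib]
  refine sum_congr rfl fun j _ => ?_
  by_cases hjq : (j : ℕ) < q
  · by_cases hjm : (j : ℕ) < m <;> simp [hjm, hjq]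
  · simp [hf j (not_lt.mp hjq), hjq]

section WeightedScatter

variable {ι n k : Type*} [Fintype ι] [Fintype n]

def weightedScatter (w : ι → ℝ) (u : ι → n → ℝ) : Matrix n n ℝ :=
  ∑ y, w y • vecMulVec (u y) (u y)

lemma posSemidef_weightedScatter {w : ι → ℝ} (hw : ∀ y, 0 ≤ w y) (u : ι → n → ℝ) :
    (weightedScatter w u).PosSemidef :=
  posSemidef_sum _ fun y _ => by
    simpa using (posSemidef_vecMulVec_self_star (u y)).smul (hw y)

lemma mul_weightedScatter_mul_transpose (A : Matrix k n ℝ) (w : ι → ℝ) (u : ι → n → ℝ) :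
    A * weightedScatter w u * Aᵀ = weightedScatter w fun y => A *ᵥ u y := by
  simp only [weightedScatter, Matrix.mul_sum, Matrix.sum_mul, Matrix.mul_smul, Matrix.smul_mul,
    mul_vecMulVec, vecMulVec_mul, vecMul_transpose]

lemma mul_weightedScatter_of_mulVec_eq {A : Matrix n n ℝ} {u : ι → n → ℝ}
    (hA : ∀ y, A *ᵥ u y = u y) (w : ι → ℝ) : A * weightedScatter w u = weightedScatter w u := by
  simp only [weightedScatter, Matrix.mul_sum, Matrix.mul_smul, mul_vecMulVec, hA]

lemma trace_weightedScatter (w : ι → ℝ) (u : ι → n → ℝ) :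
    trace (weightedScatter w u) = ∑ y, w y * (u y ⬝ᵥ u y) := by
  simp only [weightedScatter, trace_sum, trace_smul, trace_vecMulVec, smul_eq_mul]

end WeightedScatter

section Residual

variable {ι n k : Type*} [Fintype ι] [Fintype n] [Fintype k] [DecidableEq k]
  {B : Matrix n k ℝ}

lemma sum_sq_sub_mulVec_eq (hB : Bᵀ * B = 1) (x : n → ℝ) (c : k → ℝ) :
    ∑ j, (x j - (B *ᵥ c) j) ^ 2
      = x ⬝ᵥ x - (Bᵀ *ᵥ x) ⬝ᵥ (Bᵀ *ᵥ x) + (Bᵀ *ᵥ x - c) ⬝ᵥ (Bᵀ *ᵥ x - c) := by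
  have hcross : x ⬝ᵥ (B *ᵥ c) = (Bᵀ *ᵥ x) ⬝ᵥ c := by
    rw [dotProduct_mulVec, mulVec_transpose]
  have hnorm : (B *ᵥ c) ⬝ᵥ (B *ᵥ c) = c ⬝ᵥ c := by
    rw [dotProduct_mulVec, ← mulVec_transpose, mulVec_mulVec, hB, one_mulVec]
  have hsq : ∑ j, (x j - (B *ᵥ c) j) ^ 2 = (x - B *ᵥ c) ⬝ᵥ (x - B *ᵥ c) := by
    simp only [dotProduct, Pi.sub_apply, sq]
  rw [hsq]
  simp only [dotProduct_sub, sub_dotProduct]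
  rw [hnorm, dotProduct_comm (B *ᵥ c) x, hcross, dotProduct_comm c (Bᵀ *ᵥ x)]
  ring

lemma sum_weighted_sq_sub_mulVec_eq (hB : Bᵀ * B = 1) (w : ι → ℝ) (u : ι → n → ℝ)
    (C : ι → k → ℝ) :
    ∑ y, w y * ∑ j, (u y j - (B *ᵥ C y) j) ^ 2
      = trace (weightedScatter w u) - trace (Bᵀ * weightedScatter w u * B)
        + ∑ y, w y * ((Bᵀ *ᵥ u y - C y) ⬝ᵥ (Bᵀ *ᵥ u y - C y)) := by
  have hconj : Bᵀ * weightedScatter w u * B = weightedScatter w fun y => Bᵀ *ᵥ u y := by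
    simpa using mul_weightedScatter_mul_transpose Bᵀ w u
  rw [hconj]
  simp only [trace_weightedScatter, sum_sq_sub_mulVec_eq hB, ← sum_sub_distrib,
    ← sum_add_distrib]
  exact sum_congr rfl fun y _ => by ring

end Residual

section LowRankApproximation

variable {ι : Type*} [Fintype ι] {p m q : ℕ} {w : ι → ℝ} {u : ι → Fin p → ℝ}
  {V : Matrix (Fin p) (Fin p) ℝ} {lam : Fin p → ℝ} {B : Matrix (Fin p) (Fin m) ℝ}

lemma sum_weighted_sq_sub_mulVec_transpose_mulVec_eq (hV : Vᵀ * V = 1)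
    (hS : weightedScatter w u = V * diagonal lam * Vᵀ)
    (hvanish : ∀ j : Fin p, q ≤ (j : ℕ) → lam j = 0) (hB : Bᵀ * B = 1)
    (htr : trace (Bᵀ * weightedScatter w u * B)
      = ∑ j ∈ univ.filter (fun j : Fin p => (j : ℕ) < m), lam j) :
    ∑ y, w y * ∑ j, (u y j - (B *ᵥ (Bᵀ *ᵥ u y)) j) ^ 2
      = ∑ j ∈ univ.filter (fun j : Fin p => m ≤ (j : ℕ) ∧ (j : ℕ) < q), lam j := by
  rw [sum_weighted_sq_sub_mulVec_eq hB, htr, hS, trace_conj_diagonal hV,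
    sum_filter_Ico_eq_sum_sub hvanish]
  simp

lemma sum_filter_Ico_le_sum_weighted_sq_sub_mulVec (hw : ∀ y, 0 ≤ w y) (hV : Vᵀ * V = 1)
    (hlam : Antitone lam) (hS : weightedScatter w u = V * diagonal lam * Vᵀ)
    (hvanish : ∀ j : Fin p, q ≤ (j : ℕ) → lam j = 0) (hB : Bᵀ * B = 1) (C : ι → Fin m → ℝ) :
    ∑ j ∈ univ.filter (fun j : Fin p => m ≤ (j : ℕ) ∧ (j : ℕ) < q), lam j
      ≤ ∑ y, w y * ∑ j, (u y j - (B *ᵥ C y) j) ^ 2 := by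
  have hKyFan := trace_conj_le_sum_filter_lt hV hlam hB
  have hres : 0 ≤ ∑ y, w y * ((Bᵀ *ᵥ u y - C y) ⬝ᵥ (Bᵀ *ᵥ u y - C y)) :=
    sum_nonneg fun y _ => mul_nonneg (hw y) (sum_nonneg fun i _ => mul_self_nonneg _)
  rw [sum_weighted_sq_sub_mulVec_eq hB, hS, trace_conj_diagonal hV,
    sum_filter_Ico_eq_sum_sub hvanish]
  linarith

end LowRankApproximation

theorem stmt_7_general {p h r : ℕ}
    (z : Fin h → Fin p → ℝ) (w : Fin h → ℝ) (hw : ∀ y, 0 < w y)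
    (Q : Matrix (Fin p) (Fin p) ℝ)
    (hQs : Qᵀ = Q) (hQi : Q * Q = Q) (hQr : Q.rank = p - r)
    (lam' : Fin p → ℝ) (V : Matrix (Fin p) (Fin p) ℝ)
    (hV : Vᵀ * V = 1) (hlam' : Antitone lam')
    (hQMQ : Q * (∑ y, w y • vecMulVec (z y) (z y)) * Q
      = V * Matrix.diagonal lam' * Vᵀ) :
    (∀ j : Fin p, p - r ≤ (j : ℕ) → lam' j = 0) ∧
    ∀ m : ℕ, ∀ hm : m ≤ p - r,
      IsLeast
        {v : ℝ | ∃ (B : Matrix (Fin p) (Fin m) ℝ) (C : Fin h → Fin m → ℝ),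
          Bᵀ * B = 1 ∧ Q * B = B ∧
          v = ∑ y, w y * ∑ j, (Q.mulVec (z y) j - B.mulVec (C y) j) ^ 2}
        (∑ j ∈ Finset.univ.filter
            fun j : Fin p => m ≤ (j : ℕ) ∧ (j : ℕ) < p - r, lam' j) ∧
      (∑ y, w y * ∑ j,
          (Q.mulVec (z y) j
            - (V.submatrix id (Fin.castLE (hm.trans (Nat.sub_le p r)))).mulVec
                ((V.submatrix id (Fin.castLE (hm.trans (Nat.sub_le p r))))ᵀ.mulVec
                  (Q.mulVec (z y))) j) ^ 2)
        = ∑ j ∈ Finset.univ.filter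
            fun j : Fin p => m ≤ (j : ℕ) ∧ (j : ℕ) < p - r, lam' j := by
  set u : Fin h → Fin p → ℝ := fun y => Q *ᵥ z y
  have hS : weightedScatter w u = V * diagonal lam' * Vᵀ := by
    rw [← hQMQ, ← hQs, ← mul_weightedScatter_mul_transpose, hQs]; rfl
  have hSpsd := posSemidef_weightedScatter (fun y => (hw y).le) u
  have hrank : (V * diagonal lam' * Vᵀ).rank ≤ p - r :=
    hQr ▸ hQMQ ▸ (rank_mul_le_left _ _).trans (rank_mul_le_left _ _)
  have hvanish := eq_zero_of_rank_conj_diagonal_le hV hlam'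
    (hSpsd.nonneg_of_eq_conj_diagonal hV hS) hrank
  refine ⟨hvanish, fun m hm => ?_⟩
  have hmp : m ≤ p := hm.trans (Nat.sub_le p r)
  obtain ⟨B, hB, hQB, htr⟩ := exists_orthonormal_mul_eq_of_projection hQs hQi hSpsd
    (mul_weightedScatter_of_mulVec_eq (fun y => by simp only [u, mulVec_mulVec, hQi]) w)
    hV hlam' hS (hQr ▸ hm)
  refine ⟨⟨⟨B, fun y => Bᵀ *ᵥ u y, hB, hQB,
    (sum_weighted_sq_sub_mulVec_transpose_mulVec_eq hV hS hvanish hB htr).symm⟩, ?_⟩,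
    sum_weighted_sq_sub_mulVec_transpose_mulVec_eq hV hS hvanish
      (transpose_submatrix_mul_submatrix hV (Fin.castLE_injective hmp))
      (hS ▸ trace_conj_submatrix_castLE hV lam' hmp)⟩
  rintro _ ⟨B, C, hB, -, rfl⟩
  exact sum_filter_Ico_le_sum_weighted_sq_sub_mulVec (fun y => (hw y).le) hV hlam' hS hvanish hB C

/-- Let `z_1,…,z_h ∈ ℝ^p`, weights `w_y > 0` with `Σ w_y z_y = 0`,
`M = Σ w_y z_y z_yᵀ`, and let `Q` be a real symmetric idempotent p×p matrix of rank `p - r`.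
Let `lam'_1 ≥ … ≥ lam'_p` be the eigenvalues of `Q M Q` (encoded through an orthogonal `V`
with `Q M Q = V (diag lam') Vᵀ`).  Then `lam'_j = 0` for all `j > p - r`, and for every
`m ≤ p - r` the minimum of `Σ_y w_y ‖Q z_y - B C_y‖²` over `p×m` matrices `B` with
`BᵀB = I_m` and `Q B = B` and all `C : Fin h → ℝ^m` equals `Σ_{m < j ≤ p-r} lam'_j`; it is
attained at `C_y = Bᵀ Q z_y` with the columns of `B` the unit eigenvectors of `Q M Q`
corresponding to `lam'_1,…,lam'_m` (the first `m` columns of `V`). -/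
theorem stmt_7 {p h r : ℕ}
    (z : Fin h → Fin p → ℝ) (w : Fin h → ℝ) (hw : ∀ y, 0 < w y)
    (hz : ∑ y, w y • z y = 0)
    (Q : Matrix (Fin p) (Fin p) ℝ)
    (hQs : Qᵀ = Q) (hQi : Q * Q = Q) (hQr : Q.rank = p - r)
    (lam' : Fin p → ℝ) (V : Matrix (Fin p) (Fin p) ℝ)
    (hV : Vᵀ * V = 1) (hlam' : Antitone lam')
    (hQMQ : Q * (∑ y, w y • vecMulVec (z y) (z y)) * Q
      = V * Matrix.diagonal lam' * Vᵀ) :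
    (∀ j : Fin p, p - r ≤ (j : ℕ) → lam' j = 0) ∧
    ∀ m : ℕ, ∀ hm : m ≤ p - r,
      IsLeast
        {v : ℝ | ∃ (B : Matrix (Fin p) (Fin m) ℝ) (C : Fin h → Fin m → ℝ),
          Bᵀ * B = 1 ∧ Q * B = B ∧
          v = ∑ y, w y * ∑ j, (Q.mulVec (z y) j - B.mulVec (C y) j) ^ 2}
        (∑ j ∈ Finset.univ.filter
            fun j : Fin p => m ≤ (j : ℕ) ∧ (j : ℕ) < p - r, lam' j) ∧
      (∑ y, w y * ∑ j,
          (Q.mulVec (z y) j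
            - (V.submatrix id (Fin.castLE (hm.trans (Nat.sub_le p r)))).mulVec
                ((V.submatrix id (Fin.castLE (hm.trans (Nat.sub_le p r))))ᵀ.mulVec
                  (Q.mulVec (z y))) j) ^ 2)
        = ∑ j ∈ Finset.univ.filter
            fun j : Fin p => m ≤ (j : ℕ) ∧ (j : ℕ) < p - r, lam' j :=
  stmt_7_general z w hw Q hQs hQi hQr lam' V hV hlam' hQMQ
end

section
/- Let J be the h×1 random indicator vector with entries J_y = 1{Y = y}, let f ∈ ℝ^h have entries f_y, let D_f and D_g be the diagonal matrices with diagonal entries f_y and g_y := √f_y, and let ε := J − f − D_g μᵀ Z. Then E[ε εᵀ] = (D_f − f fᵀ) − D_g μᵀ μ D_g, and consequently E[D_g^{-1} ε εᵀ D_g^{-1}] = Q_g − μᵀ μ, where Q_g = I_h − g gᵀ and g ∈ ℝ^h has entries g_y. -/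
open MeasureTheory Matrix

/-!
The residual `ε_t = J_t - f_t - g_t ∑ᵢ μ_{it} Z_i` is orthogonal in `L²` both to the constants and
to every `Z_i`: this is exactly what the choice `μ_{iy} = g_y E[Z_i | Y = y]` arranges, since
`E[Z_i J_y] = g_y μ_{iy}`. Hence `E[ε_y ε_t] = E[J_y ε_t]`, which is computed from the moments
`E[J_y J_t] = δ_{yt} f_y`, `E[J_y] = f_y` and `E[J_y Z_i] = g_y μ_{iy}`. The normalized statement
follows by dividing by `g_y g_t` and using `g_y² = f_y`.
-/

section Moments

variable {Ω : Type*} [MeasurableSpace Ω] {μ : Measure Ω}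

lemma integral_mul_sub_sub_mul_sum [IsFiniteMeasure μ] {κ : Type*} [Fintype κ]
    {w u : Ω → ℝ} {X : Ω → κ → ℝ} (hw : MemLp w 2 μ) (hu : MemLp u 2 μ)
    (hX : ∀ i, MemLp (fun ω => X ω i) 2 μ) (a b : ℝ) (c : κ → ℝ) :
    ∫ ω, w ω * (u ω - a - b * ∑ i, c i * X ω i) ∂μ
      = ∫ ω, w ω * u ω ∂μ - a * ∫ ω, w ω ∂μ - b * ∑ i, c i * ∫ ω, w ω * X ω i ∂μ := by
  have hwu : Integrable (fun ω => w ω * u ω) μ := hw.integrable_mul hu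
  have haw : Integrable (fun ω => a * w ω) μ := (hw.integrable one_le_two).const_mul a
  have hwX : ∀ i, Integrable (fun ω => c i * (w ω * X ω i)) μ :=
    fun i => (hw.integrable_mul (hX i)).const_mul (c i)
  have hbwX : Integrable (fun ω => b * ∑ i, c i * (w ω * X ω i)) μ :=
    (integrable_finsetSum _ fun i _ => hwX i).const_mul b
  calc ∫ ω, w ω * (u ω - a - b * ∑ i, c i * X ω i) ∂μ
      = ∫ ω, w ω * u ω - a * w ω - b * ∑ i, c i * (w ω * X ω i) ∂μ := by
        congr 1 with ω
        simp only [mul_sub, Finset.mul_sum]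
        ring_nf
    _ = _ := by
        rw [integral_sub (f := fun ω => w ω * u ω - a * w ω) (hwu.sub haw) hbwX,
          integral_sub hwu haw, integral_const_mul, integral_const_mul,
          integral_finsetSum _ fun i _ => hwX i]
        simp only [integral_const_mul]

theorem integral_residual_mul_residual [IsProbabilityMeasure μ] {ι κ : Type*} [Fintype κ]
    [DecidableEq ι] [DecidableEq κ] (J : Ω → ι → ℝ) (hJ : ∀ y, MemLp (fun ω => J ω y) 2 μ)
    (Z : Ω → κ → ℝ) (hZ : ∀ i, MemLp (fun ω => Z ω i) 2 μ) (f g : ι → ℝ) (M : Matrix κ ι ℝ)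
    (hEJ : ∀ y, ∫ ω, J ω y ∂μ = f y)
    (hJJ : ∀ y t, ∫ ω, J ω y * J ω t ∂μ = if y = t then f y else 0)
    (hEZ : ∀ i, ∫ ω, Z ω i ∂μ = 0)
    (hZZ : ∀ i j, ∫ ω, Z ω i * Z ω j ∂μ = if i = j then 1 else 0)
    (hZJ : ∀ i y, ∫ ω, Z ω i * J ω y ∂μ = g y * M i y)
    (ε : Ω → ι → ℝ) (hε : ∀ ω y, ε ω y = J ω y - f y - g y * ∑ i, M i y * Z ω i) (y t : ι) :
    ∫ ω, ε ω y * ε ω t ∂μ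
      = (if y = t then f y else 0) - f y * f t - g y * g t * ∑ i, M i y * M i t := by
  have hεL2 : ∀ t, MemLp (fun ω => ε ω t) 2 μ := fun t => by
    simp_rw [hε]
    exact ((hJ t).sub (memLp_const _)).sub
      ((memLp_finsetSum _ fun i _ => (hZ i).const_mul (M i t)).const_mul _)
  have hmul : ∀ w, MemLp w 2 μ → ∀ t, ∫ ω, w ω * ε ω t ∂μ
      = ∫ ω, w ω * J ω t ∂μ - f t * ∫ ω, w ω ∂μ
        - g t * ∑ i, M i t * ∫ ω, w ω * Z ω i ∂μ := fun w hw t => by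
    simp_rw [hε]
    exact integral_mul_sub_sub_mul_sum hw (hJ t) hZ _ _ _
  have hmean : ∀ t, ∫ ω, ε ω t ∂μ = 0 := fun t => by
    simpa [hEJ, hEZ] using hmul (fun _ => 1) (memLp_const 1) t
  have horth : ∀ i t, ∫ ω, Z ω i * ε ω t ∂μ = 0 := fun i t => by
    rw [hmul _ (hZ i) t, hZJ, hEZ]
    simp [hZZ]
  have hJε : ∫ ω, J ω t * ε ω y ∂μ
      = (if t = y then f t else 0) - f y * f t - g y * ∑ i, M i y * (g t * M i t) := by
    rw [hmul _ (hJ t) y, hJJ, hEJ]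
    simp_rw [mul_comm (J _ t), hZJ]
  calc ∫ ω, ε ω y * ε ω t ∂μ = ∫ ω, J ω t * ε ω y ∂μ := by
        rw [hmul _ (hεL2 y) t, hmean]
        simp_rw [mul_comm (ε _ y), horth]
        simp
    _ = _ := by
        have hδ : (if t = y then f t else 0) = if y = t then f y else 0 := by
          by_cases h : y = t
          · simp [h]
          · simp [h, Ne.symm h]
        rw [hJε, hδ, Finset.mul_sum, Finset.mul_sum]
        congr 1
        exact Finset.sum_congr rfl fun i _ => by ring

end Moments

section Indicator

variable {Ω α : Type*} [DecidableEq α] {Y : Ω → α}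

lemma ite_eq_indicator_preimage (y : α) :
    (fun ω => if Y ω = y then (1 : ℝ) else 0) = (Y ⁻¹' {y}).indicator 1 := by
  ext ω
  by_cases h : Y ω = y <;> simp [h]

variable [MeasurableSpace Ω] {μ : Measure Ω} [MeasurableSpace α] [MeasurableSingletonClass α]

lemma memLp_ite_eq [IsFiniteMeasure μ] (hY : Measurable Y) (y : α) (p : ENNReal) :
    MemLp (fun ω => if Y ω = y then (1 : ℝ) else 0) p μ := by
  rw [ite_eq_indicator_preimage]
  exact (memLp_const 1).indicator (hY (measurableSet_singleton y))

lemma integral_ite_eq (hY : Measurable Y) (y : α) :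
    ∫ ω, (if Y ω = y then (1 : ℝ) else 0) ∂μ = μ.real {ω | Y ω = y} := by
  rw [ite_eq_indicator_preimage]
  exact integral_indicator_one (hY (measurableSet_singleton y))

lemma integral_ite_eq_mul_ite_eq (hY : Measurable Y) (y t : α) :
    ∫ ω, (if Y ω = y then (1 : ℝ) else 0) * (if Y ω = t then 1 else 0) ∂μ
      = if y = t then μ.real {ω | Y ω = y} else 0 := by
  have hprod : ∀ ω, ((if Y ω = y then (1 : ℝ) else 0) * if Y ω = t then 1 else 0)
      = if y = t then (if Y ω = y then 1 else 0) else 0 := fun ω => by grind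
  simp_rw [hprod]
  split_ifs
  · exact integral_ite_eq hY y
  · exact integral_zero Ω ℝ

end Indicator

/-- Let `Y : Ω → {1,…,h}` with `f_y := ℙ(Y = y) > 0`, and `Z : Ω → ℝ^p`
square-integrable with `E[Z] = 0` and `E[Z Zᵀ] = I_p`.  Let `μmat` be the p×h matrix with
y-th column `g_y E[Z | Y = y]`, `g_y = √f_y`.  With `J_y = 1{Y = y}` and
`ε := J - f - D_g μmatᵀ Z`, one has `E[ε εᵀ] = (D_f - f fᵀ) - D_g μmatᵀ μmat D_g`, and
consequently `E[D_g⁻¹ ε εᵀ D_g⁻¹] = Q_g - μmatᵀ μmat` where `Q_g = I_h - g gᵀ`. -/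
theorem stmt_11 {p h : ℕ} {Ω : Type*} [MeasurableSpace Ω]
    (μ : Measure Ω) [IsProbabilityMeasure μ]
    (Y : Ω → Fin h) (hY : Measurable Y)
    (Z : Ω → Fin p → ℝ) (hZ : ∀ i, MemLp (fun ω => Z ω i) 2 μ)
    (f : Fin h → ℝ) (hf : ∀ y, f y = (μ {ω | Y ω = y}).toReal)
    (hfpos : ∀ y, 0 < f y)
    (g : Fin h → ℝ) (hg : ∀ y, g y = Real.sqrt (f y))
    (hEZ : ∀ i, ∫ ω, Z ω i ∂μ = 0)
    (hZZ : ∀ i j, ∫ ω, Z ω i * Z ω j ∂μ = if i = j then (1 : ℝ) else 0)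
    (μmat : Matrix (Fin p) (Fin h) ℝ)
    (hμmat : ∀ i y, μmat i y
      = g y * ((f y)⁻¹ * ∫ ω, Z ω i * (if Y ω = y then (1 : ℝ) else 0) ∂μ))
    (ε : Ω → Fin h → ℝ)
    (hε : ∀ ω y, ε ω y = (if Y ω = y then (1 : ℝ) else 0) - f y
      - g y * ∑ i, μmat i y * Z ω i) :
    (∀ y t, ∫ ω, ε ω y * ε ω t ∂μ
      = ((if y = t then f y else 0) - f y * f t)
        - g y * g t * ∑ i, μmat i y * μmat i t) ∧
    (∀ y t, ∫ ω, ((g y)⁻¹ * ε ω y) * ((g t)⁻¹ * ε ω t) ∂μ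
      = (if y = t then (1 : ℝ) else 0) - g y * g t - ∑ i, μmat i y * μmat i t) := by
  have hgg : ∀ y, g y * g y = f y := fun y => by rw [hg]; exact Real.mul_self_sqrt (hfpos y).le
  have hg0 : ∀ y, g y ≠ 0 := fun y => by rw [hg]; exact (Real.sqrt_pos.2 (hfpos y)).ne'
  have hZJ : ∀ i y, ∫ ω, Z ω i * (if Y ω = y then (1 : ℝ) else 0) ∂μ = g y * μmat i y :=
    fun i y => by rw [hμmat, ← mul_assoc, hgg, mul_inv_cancel_left₀ (hfpos y).ne']
  have hcov := integral_residual_mul_residual _ (fun y => memLp_ite_eq hY y 2) Z hZ f g μmat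
    (fun y => by rw [integral_ite_eq hY, hf, measureReal_def])
    (fun y t => by rw [integral_ite_eq_mul_ite_eq hY, hf, measureReal_def]) hEZ hZZ hZJ ε hε
  refine ⟨hcov, fun y t => ?_⟩
  calc ∫ ω, ((g y)⁻¹ * ε ω y) * ((g t)⁻¹ * ε ω t) ∂μ
      = (g y)⁻¹ * (g t)⁻¹ * ∫ ω, ε ω y * ε ω t ∂μ := by
        rw [← integral_const_mul]
        congr 1 with ω
        ring
    _ = _ := by
        rw [hcov, ← hgg y, ← hgg t]
        split_ifs with hyt
        · subst hyt
          field_simp [hg0 y]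
        · field_simp [hg0 y, hg0 t]
          ring
end

section
/- Let m_y := f_y^{-1} E[Z · 1{Y = y}] ∈ ℝ^p and let μ be the p×h matrix whose y-th column is √f_y · m_y. Then I_p − μ μᵀ = I_p − Σ_{y=1}^h f_y m_y m_yᵀ is positive semidefinite; consequently every eigenvalue of μ μᵀ lies in the interval [0, 1]. -/
/-! For `v : ℝ^p` put `g := v ⬝ᵥ Z`. Then
`vᵀ μ μᵀ v = ∑_y f_y (v ⬝ᵥ m_y)² = ∑_y (∫_{Y=y} g)² / ℙ(Y = y)`, and Cauchy–Schwarz on the fiber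
`{Y = y}` bounds the `y`-th term by `∫_{Y=y} g²`. Summing over the partition
gives `vᵀ μ μᵀ v ≤ E[g²] = |v|²` by isotropy of `Z`, i.e. `0 ≤ μ μᵀ ≤ I`. -/

open MeasureTheory Matrix

section Integrals

variable {Ω : Type*} [MeasurableSpace Ω]

theorem sq_integral_le_measureReal_univ_mul_integral_sq {ν : Measure Ω} [IsFiniteMeasure ν]
    {g : Ω → ℝ} (hg : MemLp g 2 ν) :
    (∫ ω, g ω ∂ν) ^ 2 ≤ ν.real Set.univ * ∫ ω, g ω ^ 2 ∂ν := by
  rcases eq_zero_or_neZero ν with rfl | _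
  · simp
  have hc : 0 < ν.real Set.univ := by
    rw [measureReal_def]
    exact ENNReal.toReal_pos (NeZero.ne _) (measure_ne_top _ _)
  have jensen : (⨍ ω, g ω ∂ν) ^ 2 ≤ ⨍ ω, g ω ^ 2 ∂ν :=
    (even_two.convexOn_pow (𝕜 := ℝ)).map_average_le (continuous_pow 2).continuousOn
      isClosed_univ (ae_of_all _ fun _ => Set.mem_univ _) (hg.integrable one_le_two)
      hg.integrable_sq
  rw [average_eq, average_eq, smul_eq_mul, smul_eq_mul, mul_pow, inv_pow,
    inv_mul_le_iff₀ (by positivity)] at jensen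
  exact jensen.trans_eq (by rw [← mul_assoc, sq, mul_inv_cancel_right₀ hc.ne'])

variable {μ : Measure Ω} {ι : Type*} {Y : Ω → ι}

theorem integral_mul_ite_eq_setIntegral [DecidableEq ι] [MeasurableSpace ι]
    [MeasurableSingletonClass ι] (hY : Measurable Y) (φ : Ω → ℝ) (y : ι) :
    ∫ ω, φ ω * (if Y ω = y then 1 else 0) ∂μ = ∫ ω in Y ⁻¹' {y}, φ ω ∂μ := by
  rw [← integral_indicator (hY (measurableSet_singleton y))]
  congr 1 with ω
  by_cases hω : Y ω = y <;> simp [hω]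

theorem sum_setIntegral_preimage_singleton [Fintype ι] [MeasurableSpace ι]
    [MeasurableSingletonClass ι] (hY : Measurable Y) {φ : Ω → ℝ} (hφ : Integrable φ μ) :
    ∑ y, ∫ ω in Y ⁻¹' {y}, φ ω ∂μ = ∫ ω, φ ω ∂μ := by
  rw [← integral_iUnion_fintype (fun y => hY (measurableSet_singleton y))
    (pairwise_disjoint_fiber Y) (fun _ => hφ.integrableOn), ← Set.preimage_iUnion,
    Set.iUnion_of_singleton, Set.preimage_univ, Measure.restrict_univ]

theorem sum_inv_measureReal_mul_sq_setIntegral_le [IsFiniteMeasure μ] [Fintype ι]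
    [MeasurableSpace ι] [MeasurableSingletonClass ι] (hY : Measurable Y) {g : Ω → ℝ}
    (hg : MemLp g 2 μ) :
    ∑ y, (μ.real (Y ⁻¹' {y}))⁻¹ * (∫ ω in Y ⁻¹' {y}, g ω ∂μ) ^ 2 ≤ ∫ ω, g ω ^ 2 ∂μ := by
  rw [← sum_setIntegral_preimage_singleton hY hg.integrable_sq]
  refine Finset.sum_le_sum fun y _ => ?_
  have hcs := sq_integral_le_measureReal_univ_mul_integral_sq (hg.restrict (Y ⁻¹' {y}))
  rw [measureReal_restrict_apply_univ] at hcs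
  rcases (measureReal_nonneg : 0 ≤ μ.real (Y ⁻¹' {y})).eq_or_lt with h0 | hpos
  · rw [← h0, _root_.inv_zero, zero_mul]
    exact setIntegral_nonneg (hY (measurableSet_singleton y)) fun ω _ => sq_nonneg (g ω)
  · rwa [inv_mul_le_iff₀ hpos]

end Integrals

section Isotropic

variable {Ω : Type*} [MeasurableSpace Ω] {μ : Measure Ω} {n : Type*} [Fintype n]
  {Z : Ω → n → ℝ}

theorem memLp_dotProduct {q : ENNReal} (hZ : ∀ i, MemLp (fun ω => Z ω i) q μ) (v : n → ℝ) :
    MemLp (fun ω => v ⬝ᵥ Z ω) q μ :=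
  memLp_finsetSum _ fun i _ => (hZ i).const_mul (v i)

theorem integral_dotProduct (hZ : ∀ i, Integrable (fun ω => Z ω i) μ) (v : n → ℝ) :
    ∫ ω, v ⬝ᵥ Z ω ∂μ = v ⬝ᵥ fun i => ∫ ω, Z ω i ∂μ := by
  simp only [dotProduct]
  rw [integral_finsetSum _ fun i _ => (hZ i).const_mul (v i)]
  simp only [integral_const_mul]

theorem integral_dotProduct_sq [DecidableEq n] (hZ : ∀ i, MemLp (fun ω => Z ω i) 2 μ)
    (hZZ : ∀ i j, ∫ ω, Z ω i * Z ω j ∂μ = if i = j then (1 : ℝ) else 0) (v : n → ℝ) :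
    ∫ ω, (v ⬝ᵥ Z ω) ^ 2 ∂μ = v ⬝ᵥ v := by
  have hcross : ∀ i, ∫ ω, Z ω i * (v ⬝ᵥ Z ω) ∂μ = v i := by
    intro i
    simp_rw [← smul_eq_mul (Z _ i), ← dotProduct_smul]
    rw [integral_dotProduct (Z := fun ω => Z ω i • Z ω) fun j => (hZ i).integrable_mul (hZ j)]
    simp [hZZ, dotProduct]
  simp_rw [sq, ← smul_eq_mul (v ⬝ᵥ Z _), ← dotProduct_smul]
  rw [integral_dotProduct (Z := fun ω => (v ⬝ᵥ Z ω) • Z ω)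
    fun i => (memLp_dotProduct hZ v).integrable_mul (hZ i)]
  simp_rw [Pi.smul_apply, smul_eq_mul, mul_comm (v ⬝ᵥ Z _), hcross]

end Isotropic

namespace Matrix

variable {m n : Type*} [Fintype n]

theorem mul_transpose_eq_sum_smul_vecMulVec {M : Matrix m n ℝ} {f : n → ℝ} (hf : ∀ y, 0 ≤ f y)
    {w : n → m → ℝ} (hM : ∀ i y, M i y = √(f y) * w y i) :
    M * Mᵀ = ∑ y, f y • vecMulVec (w y) (w y) := by
  ext i j
  simp only [mul_apply, transpose_apply, sum_apply, smul_apply, vecMulVec_apply, smul_eq_mul,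
    hM]
  refine Finset.sum_congr rfl fun y _ => ?_
  rw [mul_mul_mul_comm, Real.mul_self_sqrt (hf y)]

theorem dotProduct_sum_smul_vecMulVec_mulVec [Fintype m] (f : n → ℝ) (w : n → m → ℝ)
    (v : m → ℝ) :
    v ⬝ᵥ (∑ y, f y • vecMulVec (w y) (w y)) *ᵥ v = ∑ y, f y * (v ⬝ᵥ w y) ^ 2 := by
  rw [sum_mulVec, dotProduct_sum]
  refine Finset.sum_congr rfl fun y _ => ?_
  rw [smul_mulVec, vecMulVec_mulVec, op_smul_eq_smul, dotProduct_smul, dotProduct_smul,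
    smul_eq_mul, smul_eq_mul, dotProduct_comm (w y) v, sq]

theorem PosSemidef.nonneg_of_mulVec_eq_smul [Fintype m] {A : Matrix m m ℝ} (hA : A.PosSemidef)
    {t : ℝ} {v : m → ℝ} (hv : v ≠ 0) (h : A *ᵥ v = t • v) : 0 ≤ t := by
  have hq := hA.dotProduct_mulVec_nonneg v
  rw [h, dotProduct_smul, smul_eq_mul] at hq
  exact nonneg_of_mul_nonneg_left hq (dotProduct_star_self_pos_iff.mpr hv)

theorem posSemidef_one_sub_of_dotProduct_mulVec_le [Fintype m] [DecidableEq m]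
    {A : Matrix m m ℝ} (hA : A.IsHermitian)
    (hle : ∀ v, v ⬝ᵥ A *ᵥ v ≤ v ⬝ᵥ v) : (1 - A).PosSemidef := by
  refine posSemidef_iff_dotProduct_mulVec.mpr ⟨isHermitian_one.sub hA, fun v => ?_⟩
  rw [star_trivial, sub_mulVec, one_mulVec, dotProduct_sub, sub_nonneg]
  exact hle v

end Matrix

section FiberMeans

variable {Ω : Type*} [MeasurableSpace Ω] {ι n : Type*} [Fintype n]

-- The paper's `m_y`; since `0⁻¹ = 0` it is `0` on a null fiber.
noncomputable def fiberMean (μ : Measure Ω) (Y : Ω → ι) (Z : Ω → n → ℝ) (y : ι) : n → ℝ :=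
  (μ.real (Y ⁻¹' {y}))⁻¹ • fun i => ∫ ω in Y ⁻¹' {y}, Z ω i ∂μ

theorem sum_measureReal_mul_dotProduct_fiberMean_sq_le {μ : Measure Ω} [IsFiniteMeasure μ]
    [Fintype ι] [MeasurableSpace ι] [MeasurableSingletonClass ι] [DecidableEq n] {Y : Ω → ι}
    (hY : Measurable Y) {Z : Ω → n → ℝ} (hZ : ∀ i, MemLp (fun ω => Z ω i) 2 μ)
    (hZZ : ∀ i j, ∫ ω, Z ω i * Z ω j ∂μ = if i = j then (1 : ℝ) else 0) (v : n → ℝ) :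
    ∑ y, μ.real (Y ⁻¹' {y}) * (v ⬝ᵥ fiberMean μ Y Z y) ^ 2 ≤ v ⬝ᵥ v := by
  calc ∑ y, μ.real (Y ⁻¹' {y}) * (v ⬝ᵥ fiberMean μ Y Z y) ^ 2
      = ∑ y, (μ.real (Y ⁻¹' {y}))⁻¹ * (∫ ω in Y ⁻¹' {y}, v ⬝ᵥ Z ω ∂μ) ^ 2 := by
        refine Finset.sum_congr rfl fun y _ => ?_
        rw [fiberMean, dotProduct_smul, smul_eq_mul,
          integral_dotProduct fun i => ((hZ i).integrable one_le_two).integrableOn]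
        rcases eq_or_ne (μ.real (Y ⁻¹' {y})) 0 with h | h
        · simp [h]
        · field_simp
    _ ≤ ∫ ω, (v ⬝ᵥ Z ω) ^ 2 ∂μ :=
        sum_inv_measureReal_mul_sq_setIntegral_le hY (memLp_dotProduct hZ v)
    _ = v ⬝ᵥ v := integral_dotProduct_sq hZ hZZ v

end FiberMeans

theorem stmt_13_general {p h : ℕ} {Ω : Type*} [MeasurableSpace Ω]
    (μ : Measure Ω) [IsProbabilityMeasure μ]
    (Y : Ω → Fin h) (hY : Measurable Y)
    (Z : Ω → Fin p → ℝ) (hZ : ∀ i, MemLp (fun ω => Z ω i) 2 μ)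
    (f : Fin h → ℝ) (hf : ∀ y, f y = (μ {ω | Y ω = y}).toReal)
    (hZZ : ∀ i j, ∫ ω, Z ω i * Z ω j ∂μ = if i = j then (1 : ℝ) else 0)
    (m : Fin h → Fin p → ℝ)
    (hm : ∀ y i, m y i = (f y)⁻¹ * ∫ ω, Z ω i * (if Y ω = y then (1 : ℝ) else 0) ∂μ)
    (μmat : Matrix (Fin p) (Fin h) ℝ)
    (hμmat : ∀ i y, μmat i y = Real.sqrt (f y) * m y i) :
    (1 - μmat * μmatᵀ).PosSemidef ∧
    1 - μmat * μmatᵀ = 1 - ∑ y, f y • vecMulVec (m y) (m y) ∧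
    ∀ (t : ℝ) (v : Fin p → ℝ), v ≠ 0 → (μmat * μmatᵀ).mulVec v = t • v →
      0 ≤ t ∧ t ≤ 1 := by
  have hf' : f = fun y => μ.real (Y ⁻¹' {y}) := funext hf
  have hm' : m = fiberMean μ Y Z := by
    ext y i
    rw [hm, integral_mul_ite_eq_setIntegral hY, hf']
    rfl
  have hgram : μmat * μmatᵀ = ∑ y, f y • vecMulVec (m y) (m y) :=
    mul_transpose_eq_sum_smul_vecMulVec (fun y => hf' ▸ measureReal_nonneg) hμmat
  have hquad : ∀ v, v ⬝ᵥ (μmat * μmatᵀ) *ᵥ v ≤ v ⬝ᵥ v := fun v => by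
    rw [hgram, dotProduct_sum_smul_vecMulVec_mulVec, hf', hm']
    exact sum_measureReal_mul_dotProduct_fiberMean_sq_le hY hZ hZZ v
  have hM : (μmat * μmatᵀ).PosSemidef := by
    simpa using posSemidef_self_mul_conjTranspose μmat
  have hIM : (1 - μmat * μmatᵀ).PosSemidef :=
    posSemidef_one_sub_of_dotProduct_mulVec_le hM.isHermitian hquad
  refine ⟨hIM, by rw [hgram], fun t v hv hMv => ⟨hM.nonneg_of_mulVec_eq_smul hv hMv, ?_⟩⟩
  have hIMv : (1 - μmat * μmatᵀ) *ᵥ v = (1 - t) • v := by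
    rw [sub_mulVec, one_mulVec, hMv, sub_smul, one_smul]
  linarith [hIM.nonneg_of_mulVec_eq_smul hv hIMv]

/-- Let `Y : Ω → {1,…,h}` with `f_y := ℙ(Y = y) > 0`, and `Z : Ω → ℝ^p`
square-integrable with `E[Z] = 0` and `E[Z Zᵀ] = I_p`.  Let
`m_y := f_y⁻¹ E[Z · 1{Y = y}]` and let `μmat` have y-th column `√f_y · m_y`.  Then
`I_p - μmat μmatᵀ = I_p - Σ_y f_y m_y m_yᵀ` is positive semidefinite; consequently every
eigenvalue of `μmat μmatᵀ` lies in `[0, 1]`. -/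
theorem stmt_13 {p h : ℕ} {Ω : Type*} [MeasurableSpace Ω]
    (μ : Measure Ω) [IsProbabilityMeasure μ]
    (Y : Ω → Fin h) (hY : Measurable Y)
    (Z : Ω → Fin p → ℝ) (hZ : ∀ i, MemLp (fun ω => Z ω i) 2 μ)
    (f : Fin h → ℝ) (hf : ∀ y, f y = (μ {ω | Y ω = y}).toReal)
    (hfpos : ∀ y, 0 < f y)
    (hEZ : ∀ i, ∫ ω, Z ω i ∂μ = 0)
    (hZZ : ∀ i j, ∫ ω, Z ω i * Z ω j ∂μ = if i = j then (1 : ℝ) else 0)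
    (m : Fin h → Fin p → ℝ)
    (hm : ∀ y i, m y i = (f y)⁻¹ * ∫ ω, Z ω i * (if Y ω = y then (1 : ℝ) else 0) ∂μ)
    (μmat : Matrix (Fin p) (Fin h) ℝ)
    (hμmat : ∀ i y, μmat i y = Real.sqrt (f y) * m y i) :
    (1 - μmat * μmatᵀ).PosSemidef ∧
    1 - μmat * μmatᵀ = 1 - ∑ y, f y • vecMulVec (m y) (m y) ∧
    ∀ (t : ℝ) (v : Fin p → ℝ), v ≠ 0 → (μmat * μmatᵀ).mulVec v = t • v →
      0 ≤ t ∧ t ≤ 1 :=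
  stmt_13_general μ Y hY Z hZ f hf hZZ m hm μmat hμmat
end
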